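/- arXiv:1810.07422 — 5 statements merged into one kernel-verified Lean document; each statement's English description precedes it below -/
import Mathlib

section
/- Let S[1:n] be a sequence of distinct reals and k ≥ 3. For every 1 ≤ x ≤ n, define inc'[x] = max{ dec[i] + M'[i−1, x] − 1 : i ∈ Z(1,x) }, with inc'[x] = 0 if Z(1,x) is empty. Then inc[x] = max{ inc'[x], M'[0, x] } (where a value of −∞ is ignored in the maximum, i.e. the maximum with 0 is taken when all candidates are −∞). -/
namespace Rollercoaster

/-- The values `S 0, ..., S (n-1)` are pairwise distinct. -/
def DistinctOn (n : ℕ) (S : ℕ → ℝ) : Prop :=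
  ∀ i j, i < n → j < n → S i = S j → i = j

/-- The contiguous slice `A p, A (p+1), ..., A q` is strictly increasing. -/
def IncrSlice (A : ℕ → ℝ) (p q : ℕ) : Prop :=
  ∀ t, p ≤ t → t < q → A t < A (t + 1)

/-- The contiguous slice `A p, A (p+1), ..., A q` is strictly decreasing. -/
def DecrSlice (A : ℕ → ℝ) (p q : ℕ) : Prop :=
  ∀ t, p ≤ t → t < q → A (t + 1) < A t

/-- The contiguous slice `A p, ..., A q` is strictly monotone (increasing or decreasing). -/
def MonoSlice (A : ℕ → ℝ) (p q : ℕ) : Prop :=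
  IncrSlice A p q ∨ DecrSlice A p q

/-- `[p, q]` is a run of the length-`m` sequence `A 0, ..., A (m-1)`: a maximal
contiguous strictly monotone slice. -/
def IsRun (m : ℕ) (A : ℕ → ℝ) (p q : ℕ) : Prop :=
  p ≤ q ∧ q < m ∧ MonoSlice A p q ∧
    (p = 0 ∨ ¬ MonoSlice A (p - 1) q) ∧ (q + 1 = m ∨ ¬ MonoSlice A p (q + 1))

/-- The length-`m` sequence `A 0, ..., A (m-1)` is a `k`-rollercoaster:
every run has length at least `k`. -/
def IsRollercoaster (k m : ℕ) (A : ℕ → ℝ) : Prop :=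
  ∀ p q, IsRun m A p q → k ≤ q + 1 - p

/-- The last run of the length-`m` sequence `A 0, ..., A (m-1)` is increasing. -/
def LastRunInc (m : ℕ) (A : ℕ → ℝ) : Prop :=
  1 ≤ m ∧ ∃ p, IsRun m A p (m - 1) ∧ IncrSlice A p (m - 1)

/-- The last run of the length-`m` sequence `A 0, ..., A (m-1)` is decreasing. -/
def LastRunDec (m : ℕ) (A : ℕ → ℝ) : Prop :=
  1 ≤ m ∧ ∃ p, IsRun m A p (m - 1) ∧ DecrSlice A p (m - 1)

/-- `idx` enumerates `m` positions, strictly increasing, all in `[a, b)`;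
this selects a (not necessarily contiguous) subsequence of the positions `a, ..., b-1`. -/
def IsSubseqIdx (a b m : ℕ) (idx : ℕ → ℕ) : Prop :=
  (∀ t, t < m → a ≤ idx t ∧ idx t < b) ∧ ∀ s t, s < t → t < m → idx s < idx t

/-- Length of a longest strictly increasing subsequence of `S` on positions `[a, b)`. -/
noncomputable def LIS (S : ℕ → ℝ) (a b : ℕ) : ℕ :=
  sSup {m | ∃ idx : ℕ → ℕ, IsSubseqIdx a b m idx ∧
    ∀ s t, s < t → t < m → S (idx s) < S (idx t)}

/-- Length of a longest strictly decreasing subsequence of `S` on positions `[a, b)`. -/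
noncomputable def LDS (S : ℕ → ℝ) (a b : ℕ) : ℕ :=
  sSup {m | ∃ idx : ℕ → ℕ, IsSubseqIdx a b m idx ∧
    ∀ s t, s < t → t < m → S (idx t) < S (idx s)}

/-- The matrix `M`: `M[i,j]` is the length of a LIS of `S` on positions `[i, j)`
(the 1-based contiguous subsequence `S[i+1:j]`) when `i < j`, and `j - i` otherwise. -/
noncomputable def Mmat (S : ℕ → ℝ) (i j : ℕ) : ℤ :=
  if i < j then (LIS S i j : ℤ) else (j : ℤ) - (i : ℤ)

/-- `inc[x]`: length of a longest `k`-rollercoaster contained in positions `[0, x)`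
(the 1-based prefix `S[1:x]`) whose last run is increasing; `0` if none exists. -/
noncomputable def incLen (k : ℕ) (S : ℕ → ℝ) (x : ℕ) : ℕ :=
  sSup {m | ∃ idx : ℕ → ℕ, IsSubseqIdx 0 x m idx ∧
    IsRollercoaster k m (fun t => S (idx t)) ∧ LastRunInc m (fun t => S (idx t))}

/-- `dec[x]`: length of a longest `k`-rollercoaster contained in positions `[0, x)`
(the 1-based prefix `S[1:x]`) whose last run is decreasing; `0` if none exists. -/
noncomputable def decLen (k : ℕ) (S : ℕ → ℝ) (x : ℕ) : ℕ :=
  sSup {m | ∃ idx : ℕ → ℕ, IsSubseqIdx 0 x m idx ∧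
    IsRollercoaster k m (fun t => S (idx t)) ∧ LastRunDec m (fun t => S (idx t))}

/-- `Z(1,x)`: the set of indices `1 ≤ i ≤ x` such that the LIS of `S[i:x]`
(positions `[i-1, x)`) is at least `k`, i.e. `M'[i-1, x] ≠ -∞`. -/
noncomputable def Zset (k : ℕ) (S : ℕ → ℝ) (x : ℕ) : Finset ℕ :=
  (Finset.Icc 1 x).filter (fun i => (k : ℤ) ≤ Mmat S (i - 1) x)

/-- `inc'[x] = max { dec[i] + M'[i-1, x] - 1 : i ∈ Z(1,x) }`, and `0` if `Z(1,x) = ∅`. -/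
noncomputable def incAux (k : ℕ) (S : ℕ → ℝ) (x : ℕ) : ℕ :=
  (Zset k S x).sup (fun i => decLen k S i + (Mmat S (i - 1) x).toNat - 1)

-- basic lemmas
variable {A B : ℕ → ℝ} {S : ℕ → ℝ}

lemma IncrSlice.restrict {p q p' q' : ℕ} (h : IncrSlice A p q) (hp : p ≤ p') (hq : q' ≤ q) :
    IncrSlice A p' q' := fun t h1 h2 => h t (hp.trans h1) (h2.trans_le hq)

lemma DecrSlice.restrict {p q p' q' : ℕ} (h : DecrSlice A p q) (hp : p ≤ p') (hq : q' ≤ q) :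
    DecrSlice A p' q' := fun t h1 h2 => h t (hp.trans h1) (h2.trans_le hq)

lemma MonoSlice.restrict {p q p' q' : ℕ} (h : MonoSlice A p q) (hp : p ≤ p') (hq : q' ≤ q) :
    MonoSlice A p' q' := h.imp (fun h => h.restrict hp hq) (fun h => h.restrict hp hq)

lemma IncrSlice.lt {p q s t : ℕ} (h : IncrSlice A p q) (hps : p ≤ s) (hst : s < t) (htq : t ≤ q) :
    A s < A t := by
  induction t with
  | zero => omega
  | succ u ih =>
    rcases Nat.lt_or_ge s u with hs | hs
    · exact (ih hs (by omega)).trans (h u (by omega) (by omega))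
    · have : s = u := by omega
      subst this
      exact h s hps (by omega)

lemma DecrSlice.lt {p q s t : ℕ} (h : DecrSlice A p q) (hps : p ≤ s) (hst : s < t) (htq : t ≤ q) :
    A t < A s := by
  induction t with
  | zero => omega
  | succ u ih =>
    rcases Nat.lt_or_ge s u with hs | hs
    · exact (h u (by omega) (by omega)).trans (ih hs (by omega))
    · have : s = u := by omega
      subst this
      exact h s hps (by omega)

lemma monoSlice_pair {t : ℕ} (h : A t ≠ A (t + 1)) : MonoSlice A t (t + 1) := by
  rcases lt_or_gt_of_ne h with hlt | hgt
  · exact Or.inl (fun s h1 h2 => by simpa [show s = t by omega] using hlt)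
  · exact Or.inr (fun s h1 h2 => by simpa [show s = t by omega] using hgt)

lemma incrSlice_congr {p q : ℕ} (h : ∀ t, t ≤ q → A t = B t) :
    IncrSlice A p q ↔ IncrSlice B p q := by
  constructor <;> intro hI t h1 h2
  · rw [← h t (by omega), ← h (t+1) (by omega)]; exact hI t h1 h2
  · rw [h t (by omega), h (t+1) (by omega)]; exact hI t h1 h2

lemma decrSlice_congr {p q : ℕ} (h : ∀ t, t ≤ q → A t = B t) :
    DecrSlice A p q ↔ DecrSlice B p q := by
  constructor <;> intro hI t h1 h2
  · rw [← h t (by omega), ← h (t+1) (by omega)]; exact hI t h1 h2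
  · rw [h t (by omega), h (t+1) (by omega)]; exact hI t h1 h2

lemma monoSlice_congr {p q : ℕ} (h : ∀ t, t ≤ q → A t = B t) :
    MonoSlice A p q ↔ MonoSlice B p q := by
  unfold MonoSlice; rw [incrSlice_congr h, decrSlice_congr h]

lemma isRun_congr {m p q : ℕ} (h : ∀ t, t < m → A t = B t) :
    IsRun m A p q ↔ IsRun m B p q := by
  unfold IsRun
  constructor <;> rintro ⟨h1, h2, h3, h4, h5⟩ <;> refine ⟨h1, h2, ?_, ?_, ?_⟩
  · exact (monoSlice_congr (fun t ht => h t (by omega))).1 h3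
  · exact h4.imp id (fun hn hm => hn ((monoSlice_congr (fun t ht => h t (by omega))).2 hm))
  · rcases h5 with h5 | h5
    · exact Or.inl h5
    · rcases Nat.eq_or_lt_of_le (Nat.succ_le_of_lt h2) with he | hlt
      · exact Or.inl he
      · exact Or.inr (fun hm => h5 ((monoSlice_congr (fun t ht => h t (by omega))).2 hm))
  · exact (monoSlice_congr (fun t ht => h t (by omega))).2 h3
  · exact h4.imp id (fun hn hm => hn ((monoSlice_congr (fun t ht => h t (by omega))).1 hm))
  · rcases h5 with h5 | h5
    · exact Or.inl h5
    · rcases Nat.eq_or_lt_of_le (Nat.succ_le_of_lt h2) with he | hlt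
      · exact Or.inl he
      · exact Or.inr (fun hm => h5 ((monoSlice_congr (fun t ht => h t (by omega))).1 hm))

lemma isRollercoaster_congr {k m : ℕ} (h : ∀ t, t < m → A t = B t) :
    IsRollercoaster k m A ↔ IsRollercoaster k m B := by
  unfold IsRollercoaster
  exact forall₂_congr (fun p q => by rw [isRun_congr h])

lemma lastRunDec_congr {m : ℕ} (h : ∀ t, t < m → A t = B t) :
    LastRunDec m A ↔ LastRunDec m B := by
  unfold LastRunDec
  refine and_congr_right fun hm => exists_congr fun p => ?_
  rw [isRun_congr h, decrSlice_congr (fun t ht => h t (by omega))]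

lemma isRun_change {m m' p q : ℕ} (h : IsRun m' A p q) (hq : q + 1 ≠ m') (hm : q < m) :
    IsRun m A p q := by
  obtain ⟨h1, h2, h3, h4, h5⟩ := h
  exact ⟨h1, hm, h3, h4, Or.inr (h5.resolve_left hq)⟩

lemma IsSubseqIdx.lower {a b m : ℕ} {idx : ℕ → ℕ} (h : IsSubseqIdx a b m idx) :
    ∀ t, t < m → a + t ≤ idx t := by
  intro t
  induction t with
  | zero => intro ht; simpa using (h.1 0 ht).1
  | succ u ih =>
    intro ht
    have h1 := ih (by omega)
    have h2 := h.2 u (u+1) (by omega) ht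
    omega

lemma IsSubseqIdx.le_b {a b m : ℕ} {idx : ℕ → ℕ} (h : IsSubseqIdx a b m idx) : m ≤ b := by
  rcases Nat.eq_zero_or_pos m with hm | hm
  · omega
  · have h1 := h.lower (m-1) (by omega)
    have h2 := (h.1 (m-1) (by omega)).2
    omega

lemma bddAbove_subseq_set {a b : ℕ} {P : ℕ → (ℕ → ℕ) → Prop} :
    BddAbove {m | ∃ idx : ℕ → ℕ, IsSubseqIdx a b m idx ∧ P m idx} := by
  refine ⟨b, fun y hy => ?_⟩
  obtain ⟨idx, hidx, -⟩ := hy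
  exact hidx.le_b

lemma zero_mem_subseq_set {a b : ℕ} {P : Prop} (hP : P) :
    0 ∈ {m | ∃ idx : ℕ → ℕ, IsSubseqIdx a b m idx ∧ P} := by
  exact ⟨id, ⟨fun t ht => by omega, fun s t hst ht => by omega⟩, hP⟩

lemma LIS_mem (S : ℕ → ℝ) (a b : ℕ) :
    ∃ idx : ℕ → ℕ, IsSubseqIdx a b (LIS S a b) idx ∧
      ∀ s t, s < t → t < LIS S a b → S (idx s) < S (idx t) := by
  have hne : {m | ∃ idx : ℕ → ℕ, IsSubseqIdx a b m idx ∧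
      ∀ s t, s < t → t < m → S (idx s) < S (idx t)}.Nonempty :=
    ⟨0, ⟨id, ⟨fun t ht => by omega, fun s t hst ht => by omega⟩, fun s t hst ht => by omega⟩⟩
  have := Nat.sSup_mem hne bddAbove_subseq_set
  exact this

lemma le_LIS {S : ℕ → ℝ} {a b m : ℕ} {idx : ℕ → ℕ} (h : IsSubseqIdx a b m idx)
    (hv : ∀ s t, s < t → t < m → S (idx s) < S (idx t)) : m ≤ LIS S a b :=
  le_csSup bddAbove_subseq_set ⟨idx, h, hv⟩

lemma le_incLen {k : ℕ} {S : ℕ → ℝ} {x m : ℕ} {idx : ℕ → ℕ} (h : IsSubseqIdx 0 x m idx)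
    (h1 : IsRollercoaster k m (fun t => S (idx t))) (h2 : LastRunInc m (fun t => S (idx t))) :
    m ≤ incLen k S x :=
  le_csSup bddAbove_subseq_set ⟨idx, h, h1, h2⟩

lemma decLen_mem {k : ℕ} {S : ℕ → ℝ} {x : ℕ} (hpos : 1 ≤ decLen k S x) :
    ∃ idx : ℕ → ℕ, IsSubseqIdx 0 x (decLen k S x) idx ∧
      IsRollercoaster k (decLen k S x) (fun t => S (idx t)) ∧
      LastRunDec (decLen k S x) (fun t => S (idx t)) := by
  by_cases hne : {m | ∃ idx : ℕ → ℕ, IsSubseqIdx 0 x m idx ∧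
      IsRollercoaster k m (fun t => S (idx t)) ∧ LastRunDec m (fun t => S (idx t))}.Nonempty
  · exact Nat.sSup_mem hne bddAbove_subseq_set
  · exfalso
    rw [Set.not_nonempty_iff_eq_empty] at hne
    have : decLen k S x = 0 := by unfold decLen; rw [hne]; exact csSup_empty
    omega

lemma incLen_mem {k : ℕ} {S : ℕ → ℝ} {x : ℕ} (hpos : 1 ≤ incLen k S x) :
    ∃ idx : ℕ → ℕ, IsSubseqIdx 0 x (incLen k S x) idx ∧
      IsRollercoaster k (incLen k S x) (fun t => S (idx t)) ∧
      LastRunInc (incLen k S x) (fun t => S (idx t)) := by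
  by_cases hne : {m | ∃ idx : ℕ → ℕ, IsSubseqIdx 0 x m idx ∧
      IsRollercoaster k m (fun t => S (idx t)) ∧ LastRunInc m (fun t => S (idx t))}.Nonempty
  · exact Nat.sSup_mem hne bddAbove_subseq_set
  · exfalso
    rw [Set.not_nonempty_iff_eq_empty] at hne
    have : incLen k S x = 0 := by unfold incLen; rw [hne]; exact csSup_empty
    omega

lemma hne_of_subseq {n x m : ℕ} {S : ℕ → ℝ} {idx : ℕ → ℕ} (hS : DistinctOn n S)
    (hxn : x ≤ n) (h : IsSubseqIdx 0 x m idx) :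
    ∀ t, t + 1 < m → S (idx t) ≠ S (idx (t + 1))  := by
  intro t ht heq
  have h1 := h.2 t (t+1) (by omega) ht
  have h2 := (h.1 t (by omega)).2
  have h3 := (h.1 (t+1) (by omega)).2
  have := hS _ _ (by omega) (by omega) heq
  omega

lemma whole_incr {k m : ℕ} (hk : 3 ≤ k) (hm : k ≤ m) {A : ℕ → ℝ}
    (hinc : IncrSlice A 0 (m - 1)) :
    IsRollercoaster k m A ∧ LastRunInc m A := by
  constructor
  · rintro p q ⟨h1, h2, h3, h4, h5⟩
    have hp : p = 0 := by
      rcases h4 with h4 | h4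
      · exact h4
      · exfalso; exact h4 (Or.inl (hinc.restrict (by omega) (by omega)))
    have hq : q + 1 = m := by
      by_contra hne
      rcases h5 with h5 | h5
      · exact hne h5
      · exact h5 (Or.inl (hinc.restrict (by omega) (by omega)))
    omega
  · exact ⟨by omega, 0, ⟨by omega, by omega, Or.inl hinc, Or.inl rfl, Or.inl (by omega)⟩, hinc⟩

lemma prefix_dec {k m p : ℕ} {A : ℕ → ℝ} (hk : 3 ≤ k)
    (hroll : IsRollercoaster k m A) (hrun : IsRun m A p (m - 1)) (hinc : IncrSlice A p (m - 1))
    (hp : 1 ≤ p) (hm : 1 ≤ m)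
    (hne : ∀ t, t + 1 < m → A t ≠ A (t + 1)) :
    IsRollercoaster k (p + 1) A ∧ LastRunDec (p + 1) A ∧ k ≤ m - p := by
  have hkrun : k ≤ m - p := by have := hroll p (m - 1) hrun; omega
  have hpm : p + 3 ≤ m := by omega
  have hAp : A p < A (p + 1) := hinc p le_rfl (by omega)
  have hlm := hrun.2.2.2.1.resolve_left (by omega)
  have hprev : A p < A (p - 1) := by
    by_contra hc
    have hne' := hne (p - 1) (by omega)
    rw [show p - 1 + 1 = p by omega] at hne'
    have hlt : A (p - 1) < A p := by
      rcases lt_or_gt_of_ne hne' with h | h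
      · exact h
      · exact absurd h (by simpa using hc)
    refine hlm (Or.inl ?_)
    intro t h1 h2
    rcases Nat.eq_or_lt_of_le h1 with he | hlt2
    · rw [← he, show p - 1 + 1 = p by omega]; exact hlt
    · exact hinc t (by omega) h2
  have hQne : DecrSlice A (p - 1) p := by
    intro t h1 h2
    rw [show t = p - 1 by omega, show p - 1 + 1 = p by omega]
    exact hprev
  set Q : Set ℕ := {a | DecrSlice A a p} with hQ
  have hmemQ0 : sInf Q ∈ Q := Nat.sInf_mem ⟨p - 1, show p - 1 ∈ Q from hQne⟩
  have hmemQ : DecrSlice A (sInf Q) p := hmemQ0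
  set p'' := sInf Q with hp''
  have hp''le : p'' ≤ p - 1 := Nat.sInf_le (show p - 1 ∈ Q from hQne)
  have hleft : p'' = 0 ∨ ¬ MonoSlice A (p'' - 1) p := by
    rcases Nat.eq_zero_or_pos p'' with h0 | h0
    · exact Or.inl h0
    · refine Or.inr ?_
      rintro (hI | hD)
      · exact absurd (hI (p - 1) (by omega) (by omega))
          (by rw [show p - 1 + 1 = p by omega]; exact not_lt.2 hprev.le)
      · exact Nat.notMem_of_lt_sInf (show p'' - 1 < sInf Q by omega) (show p'' - 1 ∈ Q from hD)
  have run_full : IsRun m A p'' p := by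
    refine ⟨by omega, by omega, Or.inr hmemQ, hleft, Or.inr ?_⟩
    rintro (hI | hD)
    · exact absurd (hI (p - 1) (by omega) (by omega))
        (by rw [show p - 1 + 1 = p by omega]; exact not_lt.2 hprev.le)
    · exact absurd (hD p (by omega) (by omega)) (not_lt.2 hAp.le)
  have hklen : k ≤ p + 1 - p'' := hroll p'' p run_full
  refine ⟨?_, ?_, hkrun⟩
  · rintro a b ⟨h1, h2, h3, h4, h5⟩
    rcases Nat.lt_or_ge b p with hb | hb
    · exact hroll a b ⟨h1, by omega, h3, h4, Or.inr (h5.resolve_left (by omega))⟩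
    · have hbp : b = p := by omega
      subst hbp
      have hap : a < b := by
        rcases Nat.eq_or_lt_of_le h1 with he | h
        · exfalso
          subst he
          have h4' := h4.resolve_left (by omega)
          refine h4' ?_
          have hne' := hne (a - 1) (by omega)
          rw [show a - 1 + 1 = a by omega] at hne'
          have := monoSlice_pair (A := A) (t := a - 1) (by rw [show a - 1 + 1 = a by omega]; exact hne')
          rwa [show a - 1 + 1 = a by omega] at this
        · exact h
      have hD : DecrSlice A a b := by
        rcases h3 with hI | hD
        · exact absurd (hI (b - 1) (by omega) (by omega))
            (by rw [show b - 1 + 1 = b by omega]; exact not_lt.2 hprev.le)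
        · exact hD
      have hge : p'' ≤ a := Nat.sInf_le (show a ∈ Q from hD)
      have ha : a = p'' := by
        by_contra hc
        have h4' := h4.resolve_left (by omega)
        exact h4' (Or.inr (hmemQ.restrict (by omega) le_rfl))
      omega
  · refine ⟨by omega, p'', ?_, ?_⟩
    · rw [show p + 1 - 1 = p by omega]
      exact ⟨by omega, by omega, Or.inr hmemQ, hleft, Or.inl rfl⟩
    · rw [show p + 1 - 1 = p by omega]
      exact hmemQ

lemma append_incr {k m c L : ℕ} {B : ℕ → ℝ} (hk : 3 ≤ k)
    (hL : L = m + c) (hc : k - 1 ≤ c)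
    (hroll : IsRollercoaster k m B) (hdec : LastRunDec m B)
    (hincr : IncrSlice B (m - 1) (L - 1))
    (hne : ∀ t, t + 1 < L → B t ≠ B (t + 1)) :
    IsRollercoaster k L B ∧ LastRunInc L B := by
  obtain ⟨hm1, p', hrunp', hdecp'⟩ := hdec
  have hkp' : k ≤ m - p' := by have := hroll p' (m - 1) hrunp'; omega
  have hmk : k ≤ m := by omega
  have hp'2 : p' + 2 ≤ m - 1 := by omega
  have hvalley : B (m - 1) < B m := by
    have := hincr (m - 1) le_rfl (by omega)
    rwa [show m - 1 + 1 = m by omega] at this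
  have hpeak : B (m - 1) < B (m - 2) := by
    have := hdecp' (m - 2) (by omega) (by omega)
    rwa [show m - 2 + 1 = m - 1 by omega] at this
  have key : ∀ p q, IsRun L B p q →
      (q + 1 < m ∧ IsRun m B p q) ∨ (q = m - 1 ∧ p = p') ∨ (p = m - 1 ∧ q = L - 1) := by
    rintro p q ⟨h1, h2, h3, h4, h5⟩
    rcases Nat.lt_or_ge (q + 1) m with hq | hq
    · exact Or.inl ⟨hq, ⟨h1, by omega, h3, h4, Or.inr (h5.resolve_left (by omega))⟩⟩
    rcases Nat.eq_or_lt_of_le hq with hq1 | hq1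
    · -- q = m - 1
      refine Or.inr (Or.inl ⟨by omega, ?_⟩)
      have hqe : q = m - 1 := by omega
      subst hqe
      have hap : p < m - 1 := by
        rcases Nat.eq_or_lt_of_le h1 with he | h
        · exfalso
          have h4' := h4.resolve_left (by omega)
          refine h4' ?_
          have := monoSlice_pair (A := B) (t := m - 2)
            (by rw [show m - 2 + 1 = m - 1 by omega]; exact hpeak.ne')
          rw [show m - 2 + 1 = m - 1 by omega] at this
          rw [he, show m - 1 - 1 = m - 2 by omega]
          exact this
        · exact h
      have hD : DecrSlice B p (m - 1) := by
        rcases h3 with hI | hD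
        · exact absurd (hI (m - 2) (by omega) (by omega))
            (by rw [show m - 2 + 1 = m - 1 by omega]; exact not_lt.2 hpeak.le)
        · exact hD
      by_contra hc2
      rcases Nat.lt_or_ge p p' with hpp | hpp
      · have h4' := hrunp'.2.2.2.1.resolve_left (by omega)
        exact h4' (Or.inr (hD.restrict (by omega) le_rfl))
      · have h4' := h4.resolve_left (by omega)
        exact h4' (Or.inr (hdecp'.restrict (by omega) le_rfl))
    · -- q ≥ m
      refine Or.inr (Or.inr ?_)
      have hpm : m - 1 ≤ p := by
        by_contra hc2
        rcases h3 with hI | hD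
        · exact absurd (hI (m - 2) (by omega) (by omega))
            (by rw [show m - 2 + 1 = m - 1 by omega]; exact not_lt.2 hpeak.le)
        · exact absurd (hD (m - 1) (by omega) (by omega))
            (by rw [show m - 1 + 1 = m by omega]; exact not_lt.2 hvalley.le)
      have hpe : p = m - 1 := by
        rcases Nat.eq_or_lt_of_le hpm with he | h
        · omega
        · exfalso
          have h4' := h4.resolve_left (by omega)
          exact h4' (Or.inl (hincr.restrict (by omega) (by omega)))
      have hqe : q = L - 1 := by
        by_contra hc2
        have h5' := h5.resolve_left (by omega)
        exact h5' (Or.inl (hincr.restrict (by omega) (by omega)))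
      exact ⟨hpe, hqe⟩
  constructor
  · intro p q hrun
    rcases key p q hrun with ⟨hq, hrun'⟩ | ⟨hq, hp⟩ | ⟨hp, hq⟩
    · exact hroll p q hrun'
    · subst hq; subst hp; omega
    · subst hp; subst hq; omega
  · refine ⟨by omega, m - 1, ⟨by omega, by omega, Or.inl hincr, Or.inr ?_, Or.inl (by omega)⟩,
      hincr⟩
    rintro (hI | hD)
    · exact absurd (hI (m - 2) (by omega) (by omega))
        (by rw [show m - 2 + 1 = m - 1 by omega]; exact not_lt.2 hpeak.le)
    · exact absurd (hD (m - 1) (by omega) (by omega))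
        (by rw [show m - 1 + 1 = m by omega]; exact not_lt.2 hvalley.le)

lemma append_decr_one {k m : ℕ} {B : ℕ → ℝ} (hk : 3 ≤ k)
    (hroll : IsRollercoaster k m B) (hdec : LastRunDec m B)
    (hlt : B m < B (m - 1)) :
    IsRollercoaster k (m + 1) B ∧ LastRunDec (m + 1) B := by
  obtain ⟨hm1, p', hrunp', hdecp'⟩ := hdec
  have hkp' : k ≤ m - p' := by have := hroll p' (m - 1) hrunp'; omega
  have hmk : k ≤ m := by omega
  have hp'2 : p' + 2 ≤ m - 1 := by omega
  have hpeak : B (m - 1) < B (m - 2) := by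
    have := hdecp' (m - 2) (by omega) (by omega)
    rwa [show m - 2 + 1 = m - 1 by omega] at this
  have hdecp'ext : DecrSlice B p' m := by
    intro t h1 h2
    rcases Nat.lt_or_ge t (m - 1) with h | h
    · exact hdecp' t h1 h
    · rw [show t = m - 1 by omega, show m - 1 + 1 = m by omega]
      exact hlt
  constructor
  · rintro p q ⟨h1, h2, h3, h4, h5⟩
    rcases Nat.lt_or_ge (q + 1) m with hq | hq
    · exact hroll p q ⟨h1, by omega, h3, h4, Or.inr (h5.resolve_left (by omega))⟩
    rcases Nat.eq_or_lt_of_le hq with hq1 | hq1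
    · -- q = m - 1 : impossible
      exfalso
      have hqe : q = m - 1 := by omega
      subst hqe
      have h5' := h5.resolve_left (by omega)
      refine h5' ?_
      rw [show m - 1 + 1 = m by omega]
      refine Or.inr ?_
      intro t ht1 ht2
      rcases Nat.lt_or_ge t (m - 1) with h | h
      · -- need DecrSlice B p (m-1) from h3
        rcases h3 with hI | hD
        · exact absurd (hI (m - 2) (by omega) (by omega))
            (by rw [show m - 2 + 1 = m - 1 by omega]; exact not_lt.2 hpeak.le)
        · exact hD t ht1 h
      · rw [show t = m - 1 by omega, show m - 1 + 1 = m by omega]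
        exact hlt
    · -- q = m
      have hqe : q = m := by omega
      have hple : p ≤ m - 1 := by
        rcases Nat.eq_or_lt_of_le h1 with he | h
        · exfalso
          have h4' := h4.resolve_left (by omega)
          refine h4' ?_
          have := monoSlice_pair (A := B) (t := m - 1)
            (by rw [show m - 1 + 1 = m by omega]; exact hlt.ne')
          rw [show m - 1 + 1 = m by omega] at this
          rw [show p - 1 = m - 1 by omega, hqe]
          exact this
        · omega
      have hD : DecrSlice B p m := by
        rcases h3 with hI | hD
        · exact absurd (hI (m - 1) (by omega) (by omega))
            (by rw [show m - 1 + 1 = m by omega]; exact not_lt.2 hlt.le)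
        · rw [hqe] at hD; exact hD
      have hpe : p = p' := by
        by_contra hc2
        rcases Nat.lt_or_ge p p' with hpp | hpp
        · have h4' := hrunp'.2.2.2.1.resolve_left (by omega)
          exact h4' (Or.inr ((hD.restrict (by omega) (by omega))))
        · have h4' := h4.resolve_left (by omega)
          rw [hqe] at h4'
          exact h4' (Or.inr (hdecp'ext.restrict (by omega) le_rfl))
      omega
  · refine ⟨by omega, p', ?_, ?_⟩
    · rw [show m + 1 - 1 = m by omega]
      refine ⟨by omega, by omega, Or.inr hdecp'ext, ?_, Or.inl rfl⟩
      rcases hrunp'.2.2.2.1 with h | h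
      · exact Or.inl h
      · refine Or.inr ?_
        intro hM
        exact h (hM.restrict le_rfl (by omega))
    · rw [show m + 1 - 1 = m by omega]
      exact hdecp'ext
/-- `inc[x] = max { inc'[x], M'[0, x] }`, where a value of `-∞` is ignored in the
maximum (i.e. replaced by `0`). -/
theorem stmt5 (k n : ℕ) (hk : 3 ≤ k) (S : ℕ → ℝ) (hS : DistinctOn n S)
    (x : ℕ) (hx1 : 1 ≤ x) (hxn : x ≤ n) :
    incLen k S x =
      max (incAux k S x) (if (k : ℤ) ≤ Mmat S 0 x then (Mmat S 0 x).toNat else 0) := by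
  have hMmat0 : Mmat S 0 x = (LIS S 0 x : ℤ) := if_pos (by omega)
  apply le_antisymm
  · -- incLen ≤ max
    rcases Nat.eq_zero_or_pos (incLen k S x) with h0 | h0
    · rw [h0]; exact Nat.zero_le _
    · obtain ⟨idx, hsub, hroll, hlast⟩ := incLen_mem h0
      set m := incLen k S x with hm
      obtain ⟨hm1, p, hrun, hinc⟩ := hlast
      have hkmp : k ≤ m - p := by have := hroll p (m - 1) hrun; omega
      rcases Nat.eq_zero_or_pos p with hp0 | hp1
      · -- p = 0 : the whole rollercoaster is increasing
        rw [hp0] at hrun hinc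
        have hvals : ∀ s t, s < t → t < m → S (idx s) < S (idx t) := fun s t hst ht =>
          hinc.lt (Nat.zero_le _) hst (by omega)
        have hle : m ≤ LIS S 0 x := le_LIS hsub hvals
        have hbranch : (k : ℤ) ≤ Mmat S 0 x := by
          rw [hMmat0]; exact_mod_cast le_trans (show k ≤ m by omega) hle
        rw [if_pos hbranch, hMmat0]
        refine le_trans ?_ (le_max_right _ _)
        simpa using hle
      · -- p ≥ 1
        have hne := hne_of_subseq hS hxn hsub
        obtain ⟨hrollP, hdecP, hkmp'⟩ := prefix_dec hk hroll hrun hinc hp1 (by omega) hne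
        have hpm : p < m := by omega
        have hpx : idx p < x := (hsub.1 p hpm).2
        set i := idx p + 1 with hi
        clear_value i
        have hsub2 : IsSubseqIdx (idx p) x (m - p) (fun t => idx (p + t)) := by
          constructor
          · intro t ht
            refine ⟨?_, (hsub.1 (p + t) (by omega)).2⟩
            rcases Nat.eq_zero_or_pos t with h | h
            · simp [h]
            · exact le_of_lt (hsub.2 p (p + t) (by omega) (by omega))
          · intro s t hst ht
            exact hsub.2 (p + s) (p + t) (by omega) (by omega)
        have hvals2 : ∀ s t, s < t → t < m - p →
            S (idx (p + s)) < S (idx (p + t)) := fun s t hst ht =>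
          hinc.lt (by omega) (by omega) (by omega)
        have hLIS2 : m - p ≤ LIS S (idx p) x := le_LIS hsub2 hvals2
        have hMi : Mmat S (i - 1) x = (LIS S (idx p) x : ℤ) := by
          rw [show i - 1 = idx p by omega]
          exact if_pos hpx
        have hiZ : i ∈ Zset k S x := by
          refine Finset.mem_filter.2 ⟨Finset.mem_Icc.2 ⟨by omega, by omega⟩, ?_⟩
          rw [hMi]
          exact_mod_cast le_trans hkmp' hLIS2
        have hsub01 : IsSubseqIdx 0 i (p + 1) idx := by
          constructor
          · intro t ht
            refine ⟨Nat.zero_le _, ?_⟩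
            have hle2 : idx t ≤ idx p := by
              rcases Nat.eq_or_lt_of_le (show t ≤ p by omega) with he | h
              · rw [he]
              · exact le_of_lt (hsub.2 t p h hpm)
            omega
          · intro s t hst ht
            exact hsub.2 s t hst (by omega)
        have hdec_i : p + 1 ≤ decLen k S i :=
          le_csSup bddAbove_subseq_set ⟨idx, hsub01, hrollP, hdecP⟩
        have hfi : m ≤ decLen k S i + (Mmat S (i - 1) x).toNat - 1 := by
          rw [hMi]
          have ht : ((LIS S (idx p) x : ℤ)).toNat = LIS S (idx p) x := Int.toNat_natCast _
          rw [ht]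
          omega
        have hsup : decLen k S i + (Mmat S (i - 1) x).toNat - 1 ≤ incAux k S x :=
          Finset.le_sup (f := fun j => decLen k S j + (Mmat S (j - 1) x).toNat - 1) hiZ
        exact le_trans (le_trans hfi hsup) (le_max_left _ _)
  · refine max_le ?_ ?_
    · -- incAux ≤ incLen
      refine Finset.sup_le ?_
      intro i hiZ
      obtain ⟨hIcc, hMk⟩ := Finset.mem_filter.1 hiZ
      obtain ⟨hi1, hix⟩ := Finset.mem_Icc.1 hIcc
      have hi1x : i - 1 < x := by omega
      have hMi : Mmat S (i - 1) x = (LIS S (i - 1) x : ℤ) := if_pos hi1x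
      have hkM : k ≤ LIS S (i - 1) x := by
        rw [hMi] at hMk; exact_mod_cast hMk
      obtain ⟨idxI, hsubI, hvalsI⟩ := LIS_mem S (i - 1) x
      set M := LIS S (i - 1) x with hM
      clear_value M
      have htoNat : (Mmat S (i - 1) x).toNat = M := by rw [hMi]; exact Int.toNat_natCast _
      rcases Nat.eq_zero_or_pos (decLen k S i) with hd0 | hd1
      · -- decLen = 0
        have hsubI' : IsSubseqIdx 0 x M idxI :=
          ⟨fun t ht => ⟨Nat.zero_le _, (hsubI.1 t ht).2⟩, hsubI.2⟩
        have hIncr : IncrSlice (fun t => S (idxI t)) 0 (M - 1) := fun t h1 h2 =>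
          hvalsI t (t + 1) (by omega) (by omega)
        obtain ⟨hr, hl⟩ := whole_incr hk hkM hIncr
        have hle := le_incLen hsubI' hr hl
        rw [hd0, htoNat]
        omega
      · -- decLen ≥ 1
        obtain ⟨idxD, hsubD, hrollD, hdecD⟩ := decLen_mem hd1
        set d := decLen k S i with hd
        clear_value d
        have hdk : k ≤ d := by
          obtain ⟨hd1', p', hrunD, -⟩ := hdecD
          have := hrollD p' (d - 1) hrunD
          omega
        have hpD : idxD (d - 1) < i := (hsubD.1 (d - 1) (by omega)).2
        have hq0 : i - 1 ≤ idxI 0 := (hsubI.1 0 (by omega)).1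
        have hq0x : idxI 0 < x := (hsubI.1 0 (by omega)).2
        have hple : idxD (d - 1) ≤ idxI 0 := by omega
        rw [htoNat]
        rcases Nat.eq_or_lt_of_le hple with heq | hlt_pos
        · -- junction at the same index: drop the first element of the LIS
          set L := d + (M - 1) with hL
          clear_value L
          set idxB : ℕ → ℕ := fun t => if t < d then idxD t else idxI (t - d + 1) with hidxB
          have hsubB : IsSubseqIdx 0 x L idxB := by
            constructor
            · intro t ht
              refine ⟨Nat.zero_le _, ?_⟩
              by_cases htd : t < d
              · simp only [hidxB, if_pos htd]
                have := (hsubD.1 t htd).2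
                omega
              · simp only [hidxB, if_neg htd]
                exact (hsubI.1 (t - d + 1) (by omega)).2
            · intro s t hst ht
              by_cases htd : t < d
              · simp only [hidxB, if_pos htd, if_pos (by omega : s < d)]
                exact hsubD.2 s t hst htd
              · simp only [hidxB, if_neg htd]
                by_cases hsd : s < d
                · simp only [if_pos hsd]
                  have h1 : idxD s ≤ idxD (d - 1) := by
                    rcases Nat.eq_or_lt_of_le (show s ≤ d - 1 by omega) with he | h
                    · rw [he]
                    · exact le_of_lt (hsubD.2 s (d - 1) h (by omega))
                  have h2 : idxI 0 < idxI (t - d + 1) :=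
                    hsubI.2 0 (t - d + 1) (by omega) (by omega)
                  exact lt_of_le_of_lt (h1.trans hple) h2
                · simp only [if_neg hsd]
                  exact hsubI.2 (s - d + 1) (t - d + 1) (by omega) (by omega)
          have hagree : ∀ t, t < d → S (idxD t) = S (idxB t) := fun t ht => by
            simp [hidxB, if_pos ht]
          have hrollB : IsRollercoaster k d (fun t => S (idxB t)) :=
            (isRollercoaster_congr hagree).1 hrollD
          have hdecB : LastRunDec d (fun t => S (idxB t)) :=
            (lastRunDec_congr hagree).1 hdecD
          have hneB := hne_of_subseq hS hxn hsubB
          have hincr : IncrSlice (fun t => S (idxB t)) (d - 1) (L - 1) := by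
            intro t h1 h2
            show S (idxB t) < S (idxB (t + 1))
            by_cases htd : t < d
            · have hte : t = d - 1 := by omega
              have hB1 : idxB t = idxI 0 := by
                simp only [hte, hidxB]
                rw [if_pos (show d - 1 < d by omega)]
                exact heq
              have hB2 : idxB (t + 1) = idxI 1 := by
                simp only [hidxB]
                rw [if_neg (show ¬ t + 1 < d by omega)]
                congr 1
                omega
              rw [hB1, hB2]
              exact hvalsI 0 1 (by omega) (by omega)
            · have hB1 : idxB t = idxI (t - d + 1) := by
                simp only [hidxB]
                rw [if_neg htd]
              have hB2 : idxB (t + 1) = idxI (t - d + 2) := by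
                simp only [hidxB]
                rw [if_neg (show ¬ t + 1 < d by omega)]
                congr 1
                omega
              rw [hB1, hB2]
              exact hvalsI (t - d + 1) (t - d + 2) (by omega) (by omega)
          obtain ⟨hrB, hlB⟩ := append_incr (c := M - 1) hk (by omega) (by omega)
            hrollB hdecB hincr hneB
          have hle := le_incLen hsubB hrB hlB
          omega
        · -- distinct junction positions
          set L := d + M with hL
          clear_value L
          set idxB : ℕ → ℕ := fun t => if t < d then idxD t else idxI (t - d) with hidxB
          have hsubB : IsSubseqIdx 0 x L idxB := by
            constructor
            · intro t ht
              refine ⟨Nat.zero_le _, ?_⟩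
              by_cases htd : t < d
              · simp only [hidxB, if_pos htd]
                have := (hsubD.1 t htd).2
                omega
              · simp only [hidxB, if_neg htd]
                exact (hsubI.1 (t - d) (by omega)).2
            · intro s t hst ht
              by_cases htd : t < d
              · simp only [hidxB, if_pos htd, if_pos (by omega : s < d)]
                exact hsubD.2 s t hst htd
              · simp only [hidxB, if_neg htd]
                by_cases hsd : s < d
                · simp only [if_pos hsd]
                  have h1 : idxD s ≤ idxD (d - 1) := by
                    rcases Nat.eq_or_lt_of_le (show s ≤ d - 1 by omega) with he | h
                    · rw [he]
                    · exact le_of_lt (hsubD.2 s (d - 1) h (by omega))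
                  have h2 : idxI 0 ≤ idxI (t - d) := by
                    rcases Nat.eq_zero_or_pos (t - d) with he | h
                    · rw [he]
                    · exact le_of_lt (hsubI.2 0 (t - d) (by omega) (by omega))
                  exact lt_of_lt_of_le (lt_of_le_of_lt h1 hlt_pos) h2
                · simp only [if_neg hsd]
                  exact hsubI.2 (s - d) (t - d) (by omega) (by omega)
          have hagree : ∀ t, t < d → S (idxD t) = S (idxB t) := fun t ht => by
            simp [hidxB, if_pos ht]
          have hrollB : IsRollercoaster k d (fun t => S (idxB t)) :=
            (isRollercoaster_congr hagree).1 hrollD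
          have hdecB : LastRunDec d (fun t => S (idxB t)) :=
            (lastRunDec_congr hagree).1 hdecD
          have hneB := hne_of_subseq hS hxn hsubB
          have hBd1 : idxB (d - 1) = idxD (d - 1) := by
            simp only [hidxB, if_pos (show d - 1 < d by omega)]
          have hBd : idxB d = idxI 0 := by
            simp only [hidxB, if_neg (show ¬ d < d by omega)]
            congr 1
            omega
          have htail : ∀ t, d ≤ t → t < L - 1 →
              S (idxB t) < S (idxB (t + 1)) := by
            intro t h1 h2
            have hB1 : idxB t = idxI (t - d) := by
              simp only [hidxB]
              rw [if_neg (show ¬ t < d by omega)]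
            have hB2 : idxB (t + 1) = idxI (t - d + 1) := by
              simp only [hidxB]
              rw [if_neg (show ¬ t + 1 < d by omega)]
              congr 1
              omega
            rw [hB1, hB2]
            exact hvalsI (t - d) (t - d + 1) (by omega) (by omega)
          have hvne : S (idxD (d - 1)) ≠ S (idxI 0) := by
            intro hEq
            have := hS _ _ (by omega) (by omega) hEq
            omega
          rcases lt_or_gt_of_ne hvne with hvlt | hvgt
          · -- increasing junction : one merged run
            have hincr : IncrSlice (fun t => S (idxB t)) (d - 1) (L - 1) := by
              intro t h1 h2
              by_cases htd : t < d
              · have hte : t = d - 1 := by omega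
                show S (idxB t) < S (idxB (t + 1))
                rw [hte, show d - 1 + 1 = d by omega, hBd1, hBd]
                exact hvlt
              · exact htail t (by omega) h2
            obtain ⟨hrB, hlB⟩ := append_incr (c := M) hk (by omega) (by omega)
              hrollB hdecB hincr hneB
            have hle := le_incLen hsubB hrB hlB
            omega
          · -- decreasing junction : extend the last decreasing run by one, then increase
            have hltB : S (idxB d) < S (idxB (d - 1)) := by
              rw [hBd1, hBd]; exact hvgt
            obtain ⟨hrB1, hdB1⟩ := append_decr_one hk hrollB hdecB hltB
            have hincr : IncrSlice (fun t => S (idxB t)) (d + 1 - 1) (L - 1) := by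
              intro t h1 h2
              exact htail t (by omega) h2
            obtain ⟨hrB, hlB⟩ := append_incr (c := M - 1) hk
              (show L = (d + 1) + (M - 1) by omega) (by omega) hrB1 hdB1 hincr hneB
            have hle := le_incLen hsubB hrB hlB
            omega
    · -- the LIS branch
      by_cases hbranch : (k : ℤ) ≤ Mmat S 0 x
      · rw [if_pos hbranch]
        have hkM : k ≤ LIS S 0 x := by
          rw [hMmat0] at hbranch; exact_mod_cast hbranch
        obtain ⟨idxI, hsubI, hvalsI⟩ := LIS_mem S 0 x
        have hIncr : IncrSlice (fun t => S (idxI t)) 0 (LIS S 0 x - 1) := fun t h1 h2 =>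
          hvalsI t (t + 1) (by omega) (by omega)
        obtain ⟨hr, hl⟩ := whole_incr hk hkM hIncr
        have hle := le_incLen hsubI hr hl
        rw [hMmat0]
        simpa using hle
      · rw [if_neg hbranch]
        exact Nat.zero_le _


end Rollercoaster
end

section
/- Let S[1:n] be a sequence of distinct reals. Then the matrix M is anti-Monge: for all 0 ≤ i < j ≤ n and 0 ≤ p < q ≤ n, M[i,p] + M[j,q] ≥ M[i,q] + M[j,p]. -/
namespace Rollercoaster

section Helpers

variable {S : ℕ → ℝ}

def lisSet (S : ℕ → ℝ) (a b : ℕ) : Set ℕ :=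
  {m | ∃ idx : ℕ → ℕ, IsSubseqIdx a b m idx ∧
    ∀ s t, s < t → t < m → S (idx s) < S (idx t)}

lemma LIS_def (S : ℕ → ℝ) (a b : ℕ) : LIS S a b = sSup (lisSet S a b) := rfl

lemma zero_mem_lisSet (S : ℕ → ℝ) (a b : ℕ) : 0 ∈ lisSet S a b :=
  ⟨fun _ => a, ⟨fun t ht => absurd ht (Nat.not_lt_zero t),
    fun _ t _ ht => absurd ht (Nat.not_lt_zero t)⟩,
    fun _ t _ ht => absurd ht (Nat.not_lt_zero t)⟩

lemma mem_lisSet_le {a b m : ℕ} (h : m ∈ lisSet S a b) : m ≤ b - a := by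
  obtain ⟨idx, ⟨hr, hm⟩, -⟩ := h
  have key : ∀ t, t < m → a + t ≤ idx t := by
    intro t
    induction t with
    | zero => intro ht; simpa using (hr 0 ht).1
    | succ t ih =>
      intro ht
      have h1 := ih (by omega)
      have h2 := hm t (t+1) (by omega) ht
      omega
  rcases Nat.eq_zero_or_pos m with h0 | h0
  · omega
  · have h1 := key (m-1) (by omega)
    have h2 := (hr (m-1) (by omega)).2
    omega

lemma bddAbove_lisSet (S : ℕ → ℝ) (a b : ℕ) : BddAbove (lisSet S a b) :=
  ⟨b - a, fun _ hm => mem_lisSet_le hm⟩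

lemma lis_mem (S : ℕ → ℝ) (a b : ℕ) : LIS S a b ∈ lisSet S a b :=
  Nat.sSup_mem ⟨0, zero_mem_lisSet S a b⟩ (bddAbove_lisSet S a b)

lemma le_lis {a b m : ℕ} (h : m ∈ lisSet S a b) : m ≤ LIS S a b :=
  le_csSup (bddAbove_lisSet S a b) h

lemma lis_le_sub (S : ℕ → ℝ) (a b : ℕ) : LIS S a b ≤ b - a :=
  mem_lisSet_le (lis_mem S a b)

lemma monoLe {f : ℕ → ℕ} {m : ℕ} (h : ∀ s t, s < t → t < m → f s < f t) :
    ∀ s t, s ≤ t → t < m → f s ≤ f t := by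
  intro s t hst ht
  rcases eq_or_lt_of_le hst with rfl | hlt
  · exact le_rfl
  · exact (h s t hlt ht).le

lemma monoLeS {f : ℕ → ℕ} {m : ℕ} (h : ∀ s t, s < t → t < m → S (f s) < S (f t)) :
    ∀ s t, s ≤ t → t < m → S (f s) ≤ S (f t) := by
  intro s t hst ht
  rcases eq_or_lt_of_le hst with rfl | hlt
  · exact le_rfl
  · exact (h s t hlt ht).le

lemma lis_split (S : ℕ → ℝ) (a b c : ℕ) : LIS S a b ≤ LIS S a c + LIS S c b := by
  classical
  obtain ⟨idx, ⟨hr, hm⟩, hv⟩ := lis_mem S a b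
  set m := LIS S a b with hmdef
  have hex : ∃ t, m ≤ t ∨ c ≤ idx t := ⟨m, Or.inl le_rfl⟩
  set k := Nat.find hex with hk
  have hkm : k ≤ m := Nat.find_min' hex (Or.inl le_rfl)
  have hlow : ∀ t, t < k → idx t < c ∧ t < m := by
    intro t ht
    have := Nat.find_min hex ht
    push_neg at this
    omega
  have hhigh : k < m → c ≤ idx k := by
    intro h
    rcases Nat.find_spec hex with h1 | h1
    · omega
    · exact h1
  have h1 : k ≤ LIS S a c := by
    apply le_lis
    exact ⟨idx, ⟨fun t ht => ⟨(hr t (by have := hlow t ht; omega)).1, (hlow t ht).1⟩,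
      fun s t hst ht => hm s t hst (by have := hlow t ht; omega)⟩,
      fun s t hst ht => hv s t hst (by have := hlow t ht; omega)⟩
  have h2 : m - k ≤ LIS S c b := by
    apply le_lis
    refine ⟨fun t => idx (k + t), ⟨fun t ht => ?_, fun s t hst ht => ?_⟩, fun s t hst ht => ?_⟩
    · dsimp only
      constructor
      · have hc : c ≤ idx k := hhigh (by omega)
        have : idx k ≤ idx (k + t) := monoLe hm k (k + t) (by omega) (by omega)
        omega
      · exact (hr (k + t) (by omega)).2
    · exact hm (k + s) (k + t) (by omega) (by omega)
    · exact hv (k + s) (k + t) (by omega) (by omega)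
  omega

lemma concat_le (S : ℕ → ℝ) (aL bL m1 m2 : ℕ) (f g : ℕ → ℕ)
    (hf : ∀ t, t < m1 → aL ≤ f t ∧ f t < bL)
    (hfm : ∀ s t, s < t → t < m1 → f s < f t)
    (hfv : ∀ s t, s < t → t < m1 → S (f s) < S (f t))
    (hg : ∀ t, t < m2 → aL ≤ g t ∧ g t < bL)
    (hgm : ∀ s t, s < t → t < m2 → g s < g t)
    (hgv : ∀ s t, s < t → t < m2 → S (g s) < S (g t))
    (seam : 1 ≤ m1 → 1 ≤ m2 → f (m1 - 1) < g 0 ∧ S (f (m1 - 1)) < S (g 0)) :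
    m1 + m2 ≤ LIS S aL bL := by
  apply le_lis
  refine ⟨fun t => if t < m1 then f t else g (t - m1), ⟨fun t ht => ?_, fun s t hst ht => ?_⟩,
    fun s t hst ht => ?_⟩
  · by_cases h : t < m1
    · simpa [h] using hf t h
    · simpa [h] using hg (t - m1) (by omega)
  · by_cases h1 : s < m1 <;> by_cases h2 : t < m1 <;> simp only [h1, h2, if_pos, if_neg, if_true, if_false]
    · exact hfm s t hst h2
    · calc f s ≤ f (m1 - 1) := monoLe hfm s (m1-1) (by omega) (by omega)
        _ < g 0 := (seam (by omega) (by omega)).1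
        _ ≤ g (t - m1) := monoLe hgm 0 (t - m1) (by omega) (by omega)
    · omega
    · exact hgm (s - m1) (t - m1) (by omega) (by omega)
  · by_cases h1 : s < m1 <;> by_cases h2 : t < m1 <;> simp only [h1, h2, if_pos, if_neg, if_true, if_false]
    · exact hfv s t hst h2
    · calc S (f s) ≤ S (f (m1 - 1)) := monoLeS hfv s (m1-1) (by omega) (by omega)
        _ < S (g 0) := (seam (by omega) (by omega)).2
        _ ≤ S (g (t - m1)) := monoLeS hgv 0 (t - m1) (by omega) (by omega)
    · omega
    · exact hgv (s - m1) (t - m1) (by omega) (by omega)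

end Helpers

section Exchange

lemma kfind (A : ℕ → ℕ) (α θ : ℕ) :
    ∃ k, k ≤ α ∧ (1 ≤ k → k - 1 < α ∧ A (k-1) < θ) ∧ (k < α → θ ≤ A k) := by
  classical
  have hex : ∃ t, α ≤ t ∨ θ ≤ A t := ⟨α, Or.inl le_rfl⟩
  refine ⟨Nat.find hex, Nat.find_min' hex (Or.inl le_rfl), ?_, ?_⟩
  · intro h1
    have := Nat.find_min hex (show Nat.find hex - 1 < Nat.find hex by omega)
    push_neg at this
    omega
  · intro h
    rcases Nat.find_spec hex with h1 | h1
    · omega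
    · exact h1

lemma lis_exchange (n : ℕ) (S : ℕ → ℝ) (hS : DistinctOn n S)
    (i j p q : ℕ) (hij : i ≤ j) (hjp : j ≤ p) (hpq : p ≤ q) (hqn : q ≤ n) :
    LIS S i q + LIS S j p ≤ LIS S i p + LIS S j q := by
  classical
  obtain ⟨A, ⟨hA, hAm⟩, hAv⟩ := lis_mem S i q
  obtain ⟨B, ⟨hB, hBm⟩, hBv⟩ := lis_mem S j p
  set α := LIS S i q with hα
  set β := LIS S j p with hβ
  have hnA : ∀ t, t < α → A t < n := fun t ht => lt_of_lt_of_le (hA t ht).2 hqn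
  have hnB : ∀ t, t < β → B t < n :=
    fun t ht => lt_of_lt_of_le (lt_of_lt_of_le (hB t ht).2 hpq) hqn
  have hne : ∀ x y, x < n → y < n → x ≠ y → S x ≠ S y :=
    fun x y hx hy hxy h => hxy (hS x y hx hy h)
  suffices h : ∃ k l, k ≤ α ∧ l ≤ β ∧
      (1 ≤ k → A (k-1) < p) ∧
      (1 ≤ k → l < β → A (k-1) < B l ∧ S (A (k-1)) < S (B l)) ∧
      (1 ≤ l → k < α → B (l-1) < A k ∧ S (B (l-1)) < S (A k)) ∧
      (k < α → j ≤ A k) by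
    obtain ⟨k, l, hkα, hlβ, P1, P2, P3, P4⟩ := h
    have hC : k + (β - l) ≤ LIS S i p := by
      apply concat_le S i p k (β - l) A (fun t => B (l + t))
      · intro t ht
        refine ⟨(hA t (by omega)).1, ?_⟩
        have h1 : A t ≤ A (k-1) := monoLe hAm t (k-1) (by omega) (by omega)
        have h2 := P1 (by omega)
        omega
      · intro s t hst ht; exact hAm s t hst (by omega)
      · intro s t hst ht; exact hAv s t hst (by omega)
      · intro t ht
        have := hB (l + t) (by omega)
        omega
      · intro s t hst ht; exact hBm (l+s) (l+t) (by omega) (by omega)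
      · intro s t hst ht; exact hBv (l+s) (l+t) (by omega) (by omega)
      · intro h1 h2
        have := P2 h1 (by omega)
        simpa using this
    have hD : l + (α - k) ≤ LIS S j q := by
      apply concat_le S j q l (α - k) B (fun t => A (k + t))
      · intro t ht
        have := hB t (by omega)
        omega
      · intro s t hst ht; exact hBm s t hst (by omega)
      · intro s t hst ht; exact hBv s t hst (by omega)
      · intro t ht
        have h1 := (hA (k+t) (by omega)).2
        have h2 : A k ≤ A (k+t) := monoLe hAm k (k+t) (by omega) (by omega)
        have h3 := P4 (by omega)
        omega
      · intro s t hst ht; exact hAm (k+s) (k+t) (by omega) (by omega)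
      · intro s t hst ht; exact hAv (k+s) (k+t) (by omega) (by omega)
      · intro h1 h2
        have := P3 h1 (by omega)
        simpa using this
    omega
  by_cases hb0 : β = 0
  · obtain ⟨k, hk1, hk2, hk3⟩ := kfind A α p
    exact ⟨k, 0, hk1, by omega, fun h1 => (hk2 h1).2,
      fun _ h2 => absurd h2 (by omega),
      fun h1 _ => absurd h1 (by omega),
      fun hk => le_trans hjp (hk3 hk)⟩
  · have hb1 : 1 ≤ β := by omega
    by_cases hlow0 : ∃ t, t < α ∧ A t < B 0 ∧ S (B 0) < S (A t)
    · by_cases hhigh : ∃ t, t < α ∧ B (β-1) < A t ∧ S (A t) < S (B (β-1))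
      · -- middle case
        set low : ℕ → Prop := fun s => ∃ t, t < α ∧ A t < B s ∧ S (B s) < S (A t) with hlowdef
        have hl0 : low 0 := hlow0
        have hnotlast : ¬ low (β-1) := by
          rintro ⟨t, ht, hpos, hval⟩
          obtain ⟨t', ht', hpos', hval'⟩ := hhigh
          have htt : t < t' := by
            by_contra hc
            have : A t' ≤ A t := monoLe hAm t' t (by omega) ht
            omega
          have := hAv t t' htt ht'
          linarith
        set l0 := Nat.findGreatest low (β-1) with hl0def
        have hl0low : low l0 := Nat.findGreatest_spec (Nat.zero_le _) hl0
        have hl0lt : l0 < β - 1 := by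
          have h1 : l0 ≤ β - 1 := Nat.findGreatest_le _
          rcases eq_or_lt_of_le h1 with h2 | h2
          · exact absurd (h2 ▸ hl0low) hnotlast
          · exact h2
        have hnotl : ¬ low (l0 + 1) :=
          Nat.findGreatest_is_greatest (P := low) (n := β - 1) (by omega) (by omega)
        simp only [hlowdef] at hnotl
        push_neg at hnotl
        obtain ⟨k, hk1, hk2, hk3⟩ := kfind A α (B (l0+1))
        have hl1β : l0 + 1 < β := by omega
        refine ⟨k, l0+1, hk1, by omega, ?_, ?_, ?_, ?_⟩
        · intro h1
          exact lt_trans (hk2 h1).2 (hB (l0+1) hl1β).2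
        · intro h1 _
          have hpos := (hk2 h1).2
          refine ⟨hpos, lt_of_le_of_ne (hnotl (k-1) (hk2 h1).1 hpos)
            (hne _ _ (hnA _ (hk2 h1).1) (hnB _ hl1β) (Nat.ne_of_lt hpos))⟩
        · intro _ hk
          obtain ⟨t0, ht0, hpos0, hval0⟩ := hl0low
          have hBl : B l0 < B (l0+1) := hBm l0 (l0+1) (by omega) hl1β
          have hposk : B ((l0+1)-1) < A k := by
            have := hk3 hk
            simpa using lt_of_lt_of_le hBl this
          have ht0k : t0 < k := by
            by_contra hc
            have h5 : A k ≤ A t0 := monoLe hAm k t0 (by omega) ht0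
            have h6 := hk3 hk
            omega
          have hvk : S (A t0) < S (A k) := hAv t0 k ht0k hk
          refine ⟨hposk, ?_⟩
          simpa using lt_trans hval0 hvk
        · intro hk
          exact le_trans (hB (l0+1) hl1β).1 (hk3 hk)
      · -- last element not high
        push_neg at hhigh
        obtain ⟨k, hk1, hk2, hk3⟩ := kfind A α p
        refine ⟨k, β, hk1, le_rfl, fun h1 => (hk2 h1).2,
          fun _ h2 => absurd h2 (lt_irrefl β), ?_, fun hk => le_trans hjp (hk3 hk)⟩
        intro _ hk
        have hpos : B (β-1) < A k := lt_of_lt_of_le (hB (β-1) (by omega)).2 (hk3 hk)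
        refine ⟨hpos, lt_of_le_of_ne (hhigh k hk hpos)
          (hne _ _ (hnB _ (by omega)) (hnA _ hk) (Nat.ne_of_lt hpos))⟩
    · -- first element not low
      push_neg at hlow0
      obtain ⟨k, hk1, hk2, hk3⟩ := kfind A α (B 0)
      refine ⟨k, 0, hk1, by omega, ?_, ?_, fun h1 _ => absurd h1 (by omega), ?_⟩
      · intro h1
        exact lt_trans (hk2 h1).2 (hB 0 (by omega)).2
      · intro h1 _
        have hpos := (hk2 h1).2
        exact ⟨hpos, lt_of_le_of_ne (hlow0 (k-1) (hk2 h1).1 hpos)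
          (hne _ _ (hnA _ (hk2 h1).1) (hnB 0 (by omega)) (Nat.ne_of_lt hpos))⟩
      · intro hk
        exact le_trans (hB 0 (by omega)).1 (hk3 hk)

end Exchange

/-- The matrix `M` is anti-Monge: for all `0 ≤ i < j ≤ n` and `0 ≤ p < q ≤ n`,
`M[i,p] + M[j,q] ≥ M[i,q] + M[j,p]`. -/
theorem stmt6 (n : ℕ) (S : ℕ → ℝ) (hS : DistinctOn n S)
    (i j p q : ℕ) (hij : i < j) (hjn : j ≤ n) (hpq : p < q) (hqn : q ≤ n) :
    Mmat S i q + Mmat S j p ≤ Mmat S i p + Mmat S j q := by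
  have F1 := lis_split S i q j
  have F2 := lis_le_sub S i j
  have F3 := lis_le_sub S i q
  have F4 := lis_split S i q p
  have F5 := lis_le_sub S p q
  have F6 := lis_split S p q j
  have F7 := lis_le_sub S p j
  rcases le_or_gt j p with hjle | hjgt
  · have F8 := lis_exchange n S hS i j p q hij.le hjle hpq.le hqn
    simp only [Mmat]
    split_ifs <;> omega
  · simp only [Mmat]
    split_ifs <;> omega

end Rollercoaster
end

section
/- Every permutation P_f in Γ can be partitioned into ℓ strictly decreasing subsequences in exactly one way, namely by the parts P₁,…,P_ℓ of its defining partition; moreover, two distinct permutations from Γ have distinct such partitions of the position set {1,…,n}. -/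
namespace Gamma

/-- `P` is a permutation of `{1, ..., n}` (normalized to `0` outside `[1, n]`). -/
def IsPerm (n : ℕ) (P : ℕ → ℕ) : Prop :=
  (∀ p, 1 ≤ p → p ≤ n → 1 ≤ P p ∧ P p ≤ n) ∧
  (∀ p q, 1 ≤ p → p ≤ n → 1 ≤ q → q ≤ n → P p = P q → p = q) ∧
  (∀ p, ¬ (1 ≤ p ∧ p ≤ n) → P p = 0)

/-- `f` assigns each middle position `p ∈ {ℓ+1, ..., n-ℓ}` a part index in `{1, ..., ℓ}`. -/
def GammaValid (n l : ℕ) (f : ℕ → ℕ) : Prop :=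
  ∀ p, l + 1 ≤ p → p ≤ n - l → 1 ≤ f p ∧ f p ≤ l

/-- The index of the part containing position `p`: part `P_i` contains positions `i`
and `n - ℓ + i`, and each middle position `p` with `f p = i`. -/
def partOf (n l : ℕ) (f : ℕ → ℕ) (p : ℕ) : ℕ :=
  if p ≤ l then p else if n - l + 1 ≤ p then p - (n - l) else f p

/-- `P` is the permutation `P_f` of `{1, ..., n}` determined by `f`: along each part
(in increasing position order) the values strictly decrease, and all values on part
`P_i` are smaller than all values on part `P_j` whenever `i < j`. -/
def IsGammaPerm (n l : ℕ) (f : ℕ → ℕ) (P : ℕ → ℕ) : Prop :=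
  IsPerm n P ∧
  (∀ p q, 1 ≤ p → p < q → q ≤ n → partOf n l f p = partOf n l f q → P q < P p) ∧
  (∀ p q, 1 ≤ p → p ≤ n → 1 ≤ q → q ≤ n → partOf n l f p < partOf n l f q → P p < P q)

/-- `g` is (the labelling of) a partition of the positions `{1, ..., n}` of the
permutation `P` into `l` strictly decreasing subsequences. -/
def IsDecPartition (n l : ℕ) (P g : ℕ → ℕ) : Prop :=
  (∀ p, 1 ≤ p → p ≤ n → 1 ≤ g p ∧ g p ≤ l) ∧
  (∀ p q, 1 ≤ p → p < q → q ≤ n → g p = g q → P q < P p)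

lemma partOf_low {n l : ℕ} (f : ℕ → ℕ) {p : ℕ} (hp : p ≤ l) : partOf n l f p = p := by
  simp [partOf, hp]

lemma partOf_high {n l : ℕ} (hn : 2 * l ≤ n) (f : ℕ → ℕ) {i : ℕ} (h1 : 1 ≤ i) (h2 : i ≤ l) :
    partOf n l f (n - l + i) = i := by
  unfold partOf
  have h3 : ¬ (n - l + i ≤ l) := by omega
  have h4 : n - l + 1 ≤ n - l + i := by omega
  simp only [h3, if_false, h4, if_true]
  omega

lemma partOf_mid {n l : ℕ} (f : ℕ → ℕ) {p : ℕ} (h1 : l + 1 ≤ p) (h2 : p ≤ n - l) :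
    partOf n l f p = f p := by
  unfold partOf
  have hA : ¬ p ≤ l := by omega
  have hB : ¬ (n - l + 1 ≤ p) := by omega
  simp [hA, hB]

lemma partOf_bounds {n l : ℕ} (hn : 2 * l ≤ n) {f : ℕ → ℕ} (hf : GammaValid n l f)
    {p : ℕ} (h1 : 1 ≤ p) (h2 : p ≤ n) : 1 ≤ partOf n l f p ∧ partOf n l f p ≤ l := by
  unfold partOf
  split_ifs with ha hb
  · omega
  · omega
  · exact hf p (by omega) (by omega)

/-- `g` is injective on the first `l` positions. -/
lemma g_inj_low {n l : ℕ} (hn : 2 * l ≤ n)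
    {f : ℕ → ℕ} {P : ℕ → ℕ} (hP : IsGammaPerm n l f P)
    {g : ℕ → ℕ} (hg : IsDecPartition n l P g) :
    ∀ i j, 1 ≤ i → i ≤ l → 1 ≤ j → j ≤ l → g i = g j → i = j := by
  obtain ⟨-, hdec, hmono⟩ := hP
  obtain ⟨-, hgd⟩ := hg
  intro i j hi1 hi2 hj1 hj2 hgij
  by_contra hne
  rcases Nat.lt_or_ge i j with h | h
  · have h1 := hgd i j hi1 h (by omega) hgij
    have h2 := hmono i j hi1 (by omega) hj1 (by omega)
      (by rw [partOf_low f hi2, partOf_low f hj2]; exact h)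
    omega
  · have hlt : j < i := by omega
    have h1 := hgd j i hj1 hlt (by omega) hgij.symm
    have h2 := hmono j i hj1 (by omega) hi1 (by omega)
      (by rw [partOf_low f hi2, partOf_low f hj2]; exact hlt)
    omega

/-- `g` is injective on the last `l` positions (indexed by `i ↦ n - l + i`). -/
lemma g_inj_high {n l : ℕ} (hn : 2 * l ≤ n)
    {f : ℕ → ℕ} {P : ℕ → ℕ} (hP : IsGammaPerm n l f P)
    {g : ℕ → ℕ} (hg : IsDecPartition n l P g) :
    ∀ i j, 1 ≤ i → i ≤ l → 1 ≤ j → j ≤ l → g (n - l + i) = g (n - l + j) → i = j := by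
  obtain ⟨-, hdec, hmono⟩ := hP
  obtain ⟨-, hgd⟩ := hg
  intro i j hi1 hi2 hj1 hj2 hgij
  by_contra hne
  rcases Nat.lt_or_ge i j with h | h
  · have h1 := hgd (n - l + i) (n - l + j) (by omega) (by omega) (by omega) hgij
    have h2 := hmono (n - l + i) (n - l + j) (by omega) (by omega) (by omega) (by omega)
      (by rw [partOf_high hn f hi1 hi2, partOf_high hn f hj1 hj2]; exact h)
    omega
  · have hlt : j < i := by omega
    have h1 := hgd (n - l + j) (n - l + i) (by omega) (by omega) (by omega) hgij.symm
    have h2 := hmono (n - l + j) (n - l + i) (by omega) (by omega) (by omega) (by omega)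
      (by rw [partOf_high hn f hi1 hi2, partOf_high hn f hj1 hj2]; exact hlt)
    omega

/-- Any decreasing partition `g` agrees with the defining partition:
each position is in the same `g`-class as position `partOf p ∈ {1,...,l}`. -/
lemma g_eq_partOf {n l : ℕ} (hl : 1 ≤ l) (hn : 2 * l ≤ n)
    {f : ℕ → ℕ} (hf : GammaValid n l f) {P : ℕ → ℕ} (hP : IsGammaPerm n l f P)
    {g : ℕ → ℕ} (hg : IsDecPartition n l P g) :
    ∀ p, 1 ≤ p → p ≤ n → g p = g (partOf n l f p) := by
  have inj1 := g_inj_low hn hP hg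
  have inj2 := g_inj_high hn hP hg
  obtain ⟨-, hdec, hmono⟩ := hP
  obtain ⟨hgb, hgd⟩ := hg
  -- surjectivity of g from the first block onto [1, l]
  have surj1 : ∀ c, 1 ≤ c → c ≤ l → ∃ j, 1 ≤ j ∧ j ≤ l ∧ g j = c := by
    intro c hc1 hc2
    have := Finset.surj_on_of_inj_on_of_card_le
      (s := Finset.Icc 1 l) (t := Finset.Icc 1 l) (fun a _ => g a)
      (fun a ha => by
        simp only [Finset.mem_Icc] at ha ⊢
        exact hgb a ha.1 (by omega))
      (fun a₁ a₂ ha₁ ha₂ h => by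
        simp only [Finset.mem_Icc] at ha₁ ha₂
        exact inj1 a₁ a₂ ha₁.1 ha₁.2 ha₂.1 ha₂.2 h)
      le_rfl c (by simp only [Finset.mem_Icc]; exact ⟨hc1, hc2⟩)
    obtain ⟨j, hj, hje⟩ := this
    simp only [Finset.mem_Icc] at hj
    exact ⟨j, hj.1, hj.2, hje.symm⟩
  -- the first-block partner of a last-block position has index ≥ the part index
  have cross : ∀ i j, 1 ≤ i → i ≤ l → 1 ≤ j → j ≤ l → g j = g (n - l + i) → i ≤ j := by
    intro i j hi1 hi2 hj1 hj2 hgji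
    by_contra h
    have hji : j < i := by omega
    have h1 := hgd j (n - l + i) hj1 (by omega) (by omega) hgji
    have h2 := hmono j (n - l + i) hj1 (by omega) (by omega) (by omega)
      (by rw [partOf_low f hj2, partOf_high hn f hi1 hi2]; omega)
    omega
  -- position i and n - l + i are in the same g-class
  have T : ∀ d i, 1 ≤ i → i ≤ l → l - i ≤ d → g i = g (n - l + i) := by
    intro d
    induction d with
    | zero =>
      intro i hi1 hi2 hd
      obtain ⟨j, hj1, hj2, hjg⟩ := surj1 (g (n - l + i)) (hgb _ (by omega) (by omega)).1
        (hgb _ (by omega) (by omega)).2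
      have := cross i j hi1 hi2 hj1 hj2 hjg
      have hje : j = i := by omega
      rw [hje] at hjg; exact hjg
    | succ d ih =>
      intro i hi1 hi2 hd
      obtain ⟨j, hj1, hj2, hjg⟩ := surj1 (g (n - l + i)) (hgb _ (by omega) (by omega)).1
        (hgb _ (by omega) (by omega)).2
      have hij := cross i j hi1 hi2 hj1 hj2 hjg
      rcases Nat.eq_or_lt_of_le hij with he | hlt
      · rw [← he] at hjg; exact hjg
      · exfalso
        have hjT := ih j hj1 hj2 (by omega)
        have : g (n - l + i) = g (n - l + j) := by rw [← hjg, hjT]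
        have := inj2 i j hi1 hi2 hj1 hj2 this
        omega
  intro p hp1 hp2
  by_cases hpl : p ≤ l
  · rw [partOf_low f hpl]
  · by_cases hph : n - l + 1 ≤ p
    · have hi1 : 1 ≤ p - (n - l) := by omega
      have hi2 : p - (n - l) ≤ l := by omega
      have hpe : p = n - l + (p - (n - l)) := by omega
      rw [hpe, partOf_high hn f hi1 hi2]
      exact (T l (p - (n - l)) hi1 hi2 (by omega)).symm
    · have hm1 : l + 1 ≤ p := by omega
      have hm2 : p ≤ n - l := by omega
      rw [partOf_mid f hm1 hm2]
      obtain ⟨hfb1, hfb2⟩ := hf p hm1 hm2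
      obtain ⟨j, hj1, hj2, hjg⟩ := surj1 (g p) (hgb p hp1 hp2).1 (hgb p hp1 hp2).2
      -- show j = f p
      have hj_lt_p : j < p := by omega
      have hPpj := hgd j p hj1 hj_lt_p hp2 hjg
      have hij : f p ≤ j := by
        by_contra h
        have := hmono j p hj1 (by omega) hp1 hp2
          (by rw [partOf_low f hj2, partOf_mid f hm1 hm2]; omega)
        omega
      have hji : j ≤ f p := by
        by_contra h
        have hT := T l j hj1 hj2 (by omega)
        have hgp : g p = g (n - l + j) := by rw [← hjg, hT]
        have h1 := hgd p (n - l + j) hp1 (by omega) (by omega) hgp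
        have h2 := hmono p (n - l + j) hp1 hp2 (by omega) (by omega)
          (by rw [partOf_mid f hm1 hm2, partOf_high hn f hj1 hj2]; omega)
        omega
      have : j = f p := by omega
      rw [← this]; exact hjg.symm

/-- A permutation value equals the count of positions with value at most it. -/
lemma perm_card {n : ℕ} {P : ℕ → ℕ} (hP : IsPerm n P) {p : ℕ} (h1 : 1 ≤ p) (h2 : p ≤ n) :
    P p = ((Finset.Icc 1 n).filter (fun q => P q ≤ P p)).card := by
  obtain ⟨hrange, hinj, -⟩ := hP
  have hinjOn : Set.InjOn P (Finset.Icc 1 n) := by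
    intro a ha b hb hab
    simp only [Finset.coe_Icc, Set.mem_Icc] at ha hb
    exact hinj a b ha.1 ha.2 hb.1 hb.2 hab
  have himg : Finset.image P (Finset.Icc 1 n) = Finset.Icc 1 n := by
    apply Finset.eq_of_subset_of_card_le
    · intro v hv
      simp only [Finset.mem_image, Finset.mem_Icc] at hv ⊢
      obtain ⟨q, hq, rfl⟩ := hv
      exact hrange q hq.1 hq.2
    · rw [Finset.card_image_of_injOn hinjOn]
  have hPp := hrange p h1 h2
  have hfil : (Finset.Icc 1 n).filter (fun v => v ≤ P p) = Finset.Icc 1 (P p) := by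
    ext v
    simp only [Finset.mem_filter, Finset.mem_Icc]
    omega
  calc P p = (Finset.Icc 1 (P p)).card := by rw [Nat.card_Icc]; omega
    _ = ((Finset.Icc 1 n).filter (fun v => v ≤ P p)).card := by rw [hfil]
    _ = (((Finset.Icc 1 n).image P).filter (fun v => v ≤ P p)).card := by rw [himg]
    _ = (((Finset.Icc 1 n).filter (fun q => P q ≤ P p)).image P).card := by
          rw [Finset.filter_image]
    _ = ((Finset.Icc 1 n).filter (fun q => P q ≤ P p)).card := by
          rw [Finset.card_image_of_injOn
            (hinjOn.mono (Finset.coe_subset.mpr (Finset.filter_subset _ _)))]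

/-- Comparison of values is determined by the parts. -/
lemma le_iff_D {n l : ℕ} {f : ℕ → ℕ} {P : ℕ → ℕ} (hP : IsGammaPerm n l f P)
    {p q : ℕ} (hp1 : 1 ≤ p) (hp2 : p ≤ n) (hq1 : 1 ≤ q) (hq2 : q ≤ n) :
    (P q ≤ P p ↔ (partOf n l f q < partOf n l f p ∨
      (partOf n l f q = partOf n l f p ∧ p ≤ q))) := by
  obtain ⟨-, hdec, hmono⟩ := hP
  constructor
  · intro h
    rcases Nat.lt_trichotomy (partOf n l f q) (partOf n l f p) with hc | hc | hc
    · exact Or.inl hc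
    · refine Or.inr ⟨hc, ?_⟩
      by_contra hqp
      have := hdec q p hq1 (by omega) hp2 hc
      omega
    · exfalso
      have := hmono p q hp1 hp2 hq1 hq2 hc
      omega
  · rintro (h | ⟨he, hpq⟩)
    · exact le_of_lt (hmono q p hq1 hq2 hp1 hp2 h)
    · rcases Nat.eq_or_lt_of_le hpq with rfl | hlt
      · exact le_refl _
      · exact le_of_lt (hdec p q hp1 hlt hq2 he.symm)

/-- Every permutation `P_f ∈ Γ` can be partitioned into `ℓ` strictly decreasing
subsequences in exactly one way, namely by the parts `P₁, ..., P_ℓ`; moreover, two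
distinct permutations from `Γ` have distinct such partitions of `{1, ..., n}`. -/
theorem stmt12 (n l : ℕ) (hl : 1 ≤ l) (hn : 2 * l ≤ n)
    (f : ℕ → ℕ) (hf : GammaValid n l f) (P : ℕ → ℕ) (hP : IsGammaPerm n l f P) :
    IsDecPartition n l P (partOf n l f) ∧
    (∀ g : ℕ → ℕ, IsDecPartition n l P g →
      ∀ p q, 1 ≤ p → p ≤ n → 1 ≤ q → q ≤ n →
        (g p = g q ↔ partOf n l f p = partOf n l f q)) ∧
    (∀ (f' P' : ℕ → ℕ), GammaValid n l f' → IsGammaPerm n l f' P' →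
      (∀ p q, 1 ≤ p → p ≤ n → 1 ≤ q → q ≤ n →
        (partOf n l f p = partOf n l f q ↔ partOf n l f' p = partOf n l f' q)) →
      ∀ p, P p = P' p) := by
  refine ⟨⟨fun p h1 h2 => partOf_bounds hn hf h1 h2, hP.2.1⟩, ?_, ?_⟩
  · intro g hg p q hp1 hp2 hq1 hq2
    have key := g_eq_partOf hl hn hf hP hg
    constructor
    · intro h
      have h1 : g (partOf n l f p) = g (partOf n l f q) := by
        rw [← key p hp1 hp2, ← key q hq1 hq2, h]
      have hbp := partOf_bounds hn hf hp1 hp2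
      have hbq := partOf_bounds hn hf hq1 hq2
      exact g_inj_low hn hP hg _ _ hbp.1 hbp.2 hbq.1 hbq.2 h1
    · intro h
      rw [key p hp1 hp2, key q hq1 hq2, h]
  · intro f' P' hf' hP' hiff p
    by_cases hp : 1 ≤ p ∧ p ≤ n
    · obtain ⟨hp1, hp2⟩ := hp
      have hpart : ∀ r, 1 ≤ r → r ≤ n → partOf n l f' r = partOf n l f r := by
        intro r hr1 hr2
        have hb := partOf_bounds hn hf hr1 hr2
        have h1 : partOf n l f r = partOf n l f (partOf n l f r) :=
          (partOf_low f hb.2).symm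
        have h2 := (hiff r (partOf n l f r) hr1 hr2 hb.1 (by omega)).1 h1
        rw [partOf_low f' hb.2] at h2
        exact h2
      rw [perm_card hP.1 hp1 hp2, perm_card hP'.1 hp1 hp2]
      congr 1
      apply Finset.filter_congr
      intro q hq
      simp only [Finset.mem_Icc] at hq
      rw [le_iff_D hP hp1 hp2 hq.1 hq.2, le_iff_D hP' hp1 hp2 hq.1 hq.2,
        hpart p hp1 hp2, hpart q hq.1 hq.2]
    · rw [hP.1.2.2 p hp, hP'.1.2.2 p hp]


end Gamma
end

section
/- The map f ↦ P_f from assignment functions to permutations is injective; consequently, Γ contains exactly ℓ^{n−2ℓ} permutations of {1,…,n}. -/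
namespace Gamma

/-- The family `Γ` of all permutations `P_f`. -/
def GammaSet (n l : ℕ) : Set (ℕ → ℕ) :=
  {P | ∃ f : ℕ → ℕ, GammaValid n l f ∧ IsGammaPerm n l f P}

/-! ### Auxiliary constructions -/

/-- A key used to totally order the positions `1, ..., n`: first by part index,
then by decreasing position within a part. -/
def key (n l : ℕ) (f : ℕ → ℕ) (p : ℕ) : ℕ :=
  partOf n l f p * (n + 1) + (n - p)

/-- The explicit permutation `P_f`: the rank of position `p` in the key order. -/
def Pmap (n l : ℕ) (f : ℕ → ℕ) (p : ℕ) : ℕ :=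
  if 1 ≤ p ∧ p ≤ n then
    ((Finset.Icc 1 n).filter (fun q => key n l f q ≤ key n l f p)).card
  else 0

lemma key_lt_of_part_lt {n l : ℕ} {f : ℕ → ℕ} {p q : ℕ}
    (h : partOf n l f p < partOf n l f q) : key n l f p < key n l f q := by
  unfold key
  have h1 : n - p ≤ n := Nat.sub_le _ _
  calc partOf n l f p * (n + 1) + (n - p)
      < partOf n l f p * (n + 1) + (n + 1) := by omega
    _ = (partOf n l f p + 1) * (n + 1) := by ring
    _ ≤ partOf n l f q * (n + 1) := Nat.mul_le_mul_right _ h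
    _ ≤ partOf n l f q * (n + 1) + (n - q) := Nat.le_add_right _ _

lemma key_inj {n l : ℕ} {f : ℕ → ℕ} {p q : ℕ}
    (hp1 : 1 ≤ p) (hp : p ≤ n) (hq1 : 1 ≤ q) (hq : q ≤ n)
    (h : key n l f p = key n l f q) : p = q := by
  rcases lt_trichotomy (partOf n l f p) (partOf n l f q) with hc | hc | hc
  · exact absurd h (Nat.ne_of_lt (key_lt_of_part_lt hc))
  · unfold key at h
    rw [hc] at h
    omega
  · exact absurd h.symm (Nat.ne_of_lt (key_lt_of_part_lt hc))

lemma Pmap_lt_Pmap {n l : ℕ} {f : ℕ → ℕ} {p q : ℕ}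
    (hp1 : 1 ≤ p) (hp : p ≤ n) (hq1 : 1 ≤ q) (hq : q ≤ n)
    (h : key n l f p < key n l f q) : Pmap n l f p < Pmap n l f q := by
  unfold Pmap
  rw [if_pos ⟨hp1, hp⟩, if_pos ⟨hq1, hq⟩]
  have hsub : (Finset.Icc 1 n).filter (fun r => key n l f r ≤ key n l f p) ⊆
      (Finset.Icc 1 n).filter (fun r => key n l f r ≤ key n l f q) := by
    intro x hx
    simp only [Finset.mem_filter] at *
    exact ⟨hx.1, hx.2.trans h.le⟩
  apply Finset.card_lt_card
  rw [Finset.ssubset_iff_of_subset hsub]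
  refine ⟨q, ?_, ?_⟩
  · simp [Finset.mem_Icc, hq1, hq]
  · simp only [Finset.mem_filter, Finset.mem_Icc]
    intro hc
    omega

lemma isGammaPerm_Pmap (n l : ℕ) (f : ℕ → ℕ) : IsGammaPerm n l f (Pmap n l f) := by
  have hbound : ∀ p, 1 ≤ p → p ≤ n → 1 ≤ Pmap n l f p ∧ Pmap n l f p ≤ n := by
    intro p hp1 hp
    unfold Pmap
    rw [if_pos ⟨hp1, hp⟩]
    constructor
    · rw [Nat.one_le_iff_ne_zero, ← Nat.pos_iff_ne_zero, Finset.card_pos]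
      exact ⟨p, by simp [Finset.mem_Icc, hp1, hp]⟩
    · calc ((Finset.Icc 1 n).filter (fun q => key n l f q ≤ key n l f p)).card
          ≤ (Finset.Icc 1 n).card := Finset.card_filter_le _ _
        _ = n := by rw [Nat.card_Icc]; omega
  refine ⟨⟨hbound, ?_, ?_⟩, ?_, ?_⟩
  · intro p q hp1 hp hq1 hq h
    rcases lt_trichotomy (key n l f p) (key n l f q) with hc | hc | hc
    · exact absurd h (Nat.ne_of_lt (Pmap_lt_Pmap hp1 hp hq1 hq hc))
    · exact key_inj hp1 hp hq1 hq hc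
    · exact absurd h.symm (Nat.ne_of_lt (Pmap_lt_Pmap hq1 hq hp1 hp hc))
  · intro p hp
    unfold Pmap
    rw [if_neg hp]
  · intro p q hp1 hpq hq h
    apply Pmap_lt_Pmap (by omega) hq hp1 (by omega)
    unfold key
    rw [h]
    omega
  · intro p q hp1 hp hq1 hq h
    exact Pmap_lt_Pmap hp1 hp hq1 hq (key_lt_of_part_lt h)

lemma lt_of_key_lt {n l : ℕ} {f P : ℕ → ℕ} (hG : IsGammaPerm n l f P) {p q : ℕ}
    (hp1 : 1 ≤ p) (hp : p ≤ n) (hq1 : 1 ≤ q) (hq : q ≤ n)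
    (h : key n l f q < key n l f p) : P q < P p := by
  obtain ⟨_, h2, h3⟩ := hG
  rcases lt_trichotomy (partOf n l f q) (partOf n l f p) with hc | hc | hc
  · exact h3 q p hq1 hq hp1 hp hc
  · have hpq : p < q := by
      unfold key at h
      rw [hc] at h
      omega
    exact h2 p q hp1 hpq hq hc.symm
  · exact absurd h (not_lt.mpr (key_lt_of_part_lt hc).le)

lemma P_le_iff {n l : ℕ} {f P : ℕ → ℕ} (hG : IsGammaPerm n l f P) {p q : ℕ}
    (hp1 : 1 ≤ p) (hp : p ≤ n) (hq1 : 1 ≤ q) (hq : q ≤ n) :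
    P q ≤ P p ↔ key n l f q ≤ key n l f p := by
  rcases lt_trichotomy (key n l f q) (key n l f p) with hc | hc | hc
  · simp [hc.le, (lt_of_key_lt hG hp1 hp hq1 hq hc).le]
  · have : q = p := key_inj hq1 hq hp1 hp hc
    subst this
    simp
  · have h' := lt_of_key_lt hG hq1 hq hp1 hp hc
    constructor <;> intro h <;> omega

/-- Uniqueness of the permutation determined by `f`. -/
lemma eq_Pmap {n l : ℕ} {f P : ℕ → ℕ} (hG : IsGammaPerm n l f P) : P = Pmap n l f := by
  funext p
  by_cases hp : 1 ≤ p ∧ p ≤ n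
  · obtain ⟨hp1, hpn⟩ := hp
    have hb := hG.1.1
    have hinj := hG.1.2.1
    have hinjOn : Set.InjOn P ↑(Finset.Icc 1 n) := by
      intro a ha b hb' hab
      simp only [Finset.coe_Icc, Set.mem_Icc] at ha hb'
      exact hinj a b ha.1 ha.2 hb'.1 hb'.2 hab
    have himg : (Finset.Icc 1 n).image P = Finset.Icc 1 n := by
      apply Finset.eq_of_subset_of_card_le
      · intro v hv
        simp only [Finset.mem_image, Finset.mem_Icc] at *
        obtain ⟨q, hq, rfl⟩ := hv
        exact hb q hq.1 hq.2
      · rw [Finset.card_image_of_injOn hinjOn]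
    have hPp := hb p hp1 hpn
    have hstep1 : ((Finset.Icc 1 n).filter (fun q => P q ≤ P p)).image P
        = (Finset.Icc 1 n).filter (fun v => v ≤ P p) := by
      ext v
      simp only [Finset.mem_image, Finset.mem_filter, Finset.mem_Icc]
      constructor
      · rintro ⟨q, ⟨hq, hle⟩, rfl⟩
        exact ⟨hb q hq.1 hq.2, hle⟩
      · rintro ⟨hv, hle⟩
        have : v ∈ (Finset.Icc 1 n).image P := by rw [himg]; simp [Finset.mem_Icc, hv]
        simp only [Finset.mem_image, Finset.mem_Icc] at this
        obtain ⟨q, hq, rfl⟩ := this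
        exact ⟨q, ⟨hq, hle⟩, rfl⟩
    have hstep2 : (Finset.Icc 1 n).filter (fun v => v ≤ P p) = Finset.Icc 1 (P p) := by
      ext v
      simp only [Finset.mem_filter, Finset.mem_Icc]
      omega
    have hrank : P p = ((Finset.Icc 1 n).filter (fun q => P q ≤ P p)).card := by
      have := Finset.card_image_of_injOn
        (hinjOn.mono (by intro x hx; exact (Finset.filter_subset _ _) hx :
          ↑((Finset.Icc 1 n).filter (fun q => P q ≤ P p)) ⊆ ↑(Finset.Icc 1 n)))
      rw [hstep1, hstep2] at this
      rw [← this, Nat.card_Icc]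
      omega
    have hfilter : (Finset.Icc 1 n).filter (fun q => P q ≤ P p)
        = (Finset.Icc 1 n).filter (fun q => key n l f q ≤ key n l f p) := by
      apply Finset.filter_congr
      intro q hq
      simp only [Finset.mem_Icc] at hq
      exact iff_of_eq (eq_iff_iff.mpr (P_le_iff hG hp1 hpn hq.1 hq.2))
    rw [hrank, hfilter]
    unfold Pmap
    rw [if_pos ⟨hp1, hpn⟩]
  · have h0 := hG.1.2.2 p hp
    unfold Pmap
    rw [if_neg hp, h0]

lemma partOf_congr {n l : ℕ} {f f' : ℕ → ℕ}
    (h : ∀ p, l + 1 ≤ p → p ≤ n - l → f p = f' p) :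
    partOf n l f = partOf n l f' := by
  funext p
  unfold partOf
  split_ifs with h1 h2
  · rfl
  · rfl
  · exact h p (by omega) (by omega)

lemma isGammaPerm_congr {n l : ℕ} {f f' P : ℕ → ℕ}
    (h : partOf n l f = partOf n l f') (hG : IsGammaPerm n l f P) :
    IsGammaPerm n l f' P := by
  unfold IsGammaPerm at *
  rw [← h]
  exact hG

lemma f_eq_middle {n l : ℕ} (hl : 1 ≤ l) (hn : 2 * l ≤ n) (f f' P : ℕ → ℕ)
    (hf : GammaValid n l f) (hf' : GammaValid n l f')
    (hP : IsGammaPerm n l f P) (hP' : IsGammaPerm n l f' P)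
    (p : ℕ) (hp1 : l + 1 ≤ p) (hp2 : p ≤ n - l) : f p = f' p := by
  by_contra hne
  obtain ⟨hi1, hi2⟩ := hf p hp1 hp2
  obtain ⟨hj1, hj2⟩ := hf' p hp1 hp2
  have hpn : p ≤ n := by omega
  have hpart : partOf n l f p = f p := by
    unfold partOf; rw [if_neg (by omega), if_neg (by omega)]
  have hpart' : partOf n l f' p = f' p := by
    unfold partOf; rw [if_neg (by omega), if_neg (by omega)]
  have hsm : ∀ i, i ≤ l → partOf n l f i = i ∧ partOf n l f' i = i := by
    intro i hi
    unfold partOf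
    rw [if_pos hi, if_pos hi]
    exact ⟨rfl, rfl⟩
  obtain ⟨_, h2, h3⟩ := hP
  obtain ⟨_, h2', h3'⟩ := hP'
  rcases Nat.lt_or_ge (f p) (f' p) with hlt | hge
  · have hii := hsm (f p) hi2
    have hA : P p < P (f p) := h2 (f p) p hi1 (by omega) hpn (by rw [hii.1, hpart])
    have hB : P (f p) < P p :=
      h3' (f p) p hi1 (by omega) (by omega) hpn (by rw [hii.2, hpart']; omega)
    omega
  · have hlt : f' p < f p := by omega
    have hjj := hsm (f' p) hj2
    have hA : P p < P (f' p) := h2' (f' p) p hj1 (by omega) hpn (by rw [hjj.2, hpart'])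
    have hB : P (f' p) < P p :=
      h3 (f' p) p hj1 (by omega) (by omega) hpn (by rw [hjj.1, hpart]; omega)
    omega

/-- The map `f ↦ P_f` is injective; consequently `Γ` contains exactly `ℓ^(n - 2ℓ)`
permutations of `{1, ..., n}`. -/
theorem stmt13 (n l : ℕ) (hl : 1 ≤ l) (hn : 2 * l ≤ n) :
    (∀ (f f' P : ℕ → ℕ), GammaValid n l f → GammaValid n l f' →
      IsGammaPerm n l f P → IsGammaPerm n l f' P →
      ∀ p, l + 1 ≤ p → p ≤ n - l → f p = f' p) ∧
    (GammaSet n l).ncard = l ^ (n - 2 * l) := by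
  refine ⟨fun f f' P hf hf' hP hP' p hp1 hp2 =>
    f_eq_middle hl hn f f' P hf hf' hP hP' p hp1 hp2, ?_⟩
  set S : Set (ℕ → ℕ) := {f | (∀ p, l + 1 ≤ p → p ≤ n - l → 1 ≤ f p ∧ f p ≤ l) ∧
      ∀ p, ¬(l + 1 ≤ p ∧ p ≤ n - l) → f p = 1} with hSdef
  have himg : GammaSet n l = (Pmap n l) '' S := by
    ext P
    constructor
    · rintro ⟨f, hf, hG⟩
      refine ⟨fun p => if l + 1 ≤ p ∧ p ≤ n - l then f p else 1, ⟨?_, ?_⟩, ?_⟩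
      · intro p h1 h2
        dsimp only
        rw [if_pos (And.intro h1 h2)]
        exact hf p h1 h2
      · intro p h
        dsimp only
        rw [if_neg h]
      · have hpc : partOf n l f
            = partOf n l (fun p => if l + 1 ≤ p ∧ p ≤ n - l then f p else 1) :=
          partOf_congr (fun p h1 h2 => (if_pos ⟨h1, h2⟩).symm)
        exact (eq_Pmap (isGammaPerm_congr hpc hG)).symm
    · rintro ⟨f, hf, rfl⟩
      exact ⟨f, fun p h1 h2 => hf.1 p h1 h2, isGammaPerm_Pmap n l f⟩
  have hinj : Set.InjOn (Pmap n l) S := by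
    intro f hf f' hf' heq
    funext p
    by_cases hp : l + 1 ≤ p ∧ p ≤ n - l
    · have h1 := isGammaPerm_Pmap n l f
      have h2 := isGammaPerm_Pmap n l f'
      rw [heq] at h1
      exact f_eq_middle hl hn f f' (Pmap n l f') hf.1 hf'.1 h1 h2 p hp.1 hp.2
    · rw [hf.2 p hp, hf'.2 p hp]
  rw [himg, Set.ncard_image_of_injOn hinj]
  have e : S ≃ (↥(Finset.Icc (l + 1) (n - l)) → Fin l) :=
    { toFun := fun f q => ⟨f.1 q.1 - 1, by
        obtain ⟨hq1, hq2⟩ := Finset.mem_Icc.mp q.2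
        have := f.2.1 q.1 hq1 hq2
        omega⟩
      invFun := fun g => ⟨fun p =>
          if h : p ∈ Finset.Icc (l + 1) (n - l) then (g ⟨p, h⟩).1 + 1 else 1, by
        constructor
        · intro p h1 h2
          dsimp only
          rw [dif_pos (Finset.mem_Icc.mpr ⟨h1, h2⟩)]
          have := (g ⟨p, Finset.mem_Icc.mpr ⟨h1, h2⟩⟩).2
          omega
        · intro p h
          dsimp only
          rw [dif_neg (fun hc => h (Finset.mem_Icc.mp hc))]⟩
      left_inv := by
        rintro ⟨f, hf1, hf2⟩
        apply Subtype.ext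
        funext p
        by_cases h : p ∈ Finset.Icc (l + 1) (n - l)
        · simp only [dif_pos h]
          obtain ⟨h1, h2⟩ := Finset.mem_Icc.mp h
          have := hf1 p h1 h2
          omega
        · simp only [dif_neg h]
          exact (hf2 p (fun hc => h (Finset.mem_Icc.mpr hc))).symm
      right_inv := by
        intro g
        funext q
        apply Fin.ext
        rcases q with ⟨q, hq⟩
        simp only [dif_pos hq]
        omega }
  rw [← Nat.card_coe_set_eq, Nat.card_congr e, Nat.card_fun,
    Nat.card_eq_fintype_card, Nat.card_eq_fintype_card, Fintype.card_coe,
    Fintype.card_fin, Nat.card_Icc]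
  congr 1
  omega

end Gamma
end

section
/- Every permutation P in Γ, viewed as the sequence (P(1),…,P(n)), satisfies LIS(P) = ℓ and LDS(P) ≤ n − 2ℓ + 2. -/
namespace Gamma

/-- Length of a longest strictly increasing subsequence of `P` on positions `[a, b)`. -/
noncomputable def LISnat (P : ℕ → ℕ) (a b : ℕ) : ℕ :=
  sSup {m | ∃ idx : ℕ → ℕ,
    (∀ t, t < m → a ≤ idx t ∧ idx t < b) ∧
    (∀ s t, s < t → t < m → idx s < idx t) ∧
    (∀ s t, s < t → t < m → P (idx s) < P (idx t))}

/-- Length of a longest strictly decreasing subsequence of `P` on positions `[a, b)`. -/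
noncomputable def LDSnat (P : ℕ → ℕ) (a b : ℕ) : ℕ :=
  sSup {m | ∃ idx : ℕ → ℕ,
    (∀ t, t < m → a ≤ idx t ∧ idx t < b) ∧
    (∀ s t, s < t → t < m → idx s < idx t) ∧
    (∀ s t, s < t → t < m → P (idx t) < P (idx s))}

lemma add_le_of_strict (m : ℕ) (g : ℕ → ℕ)
    (h : ∀ s t, s < t → t < m → g s < g t) :
    ∀ s t, s ≤ t → t < m → g s + (t - s) ≤ g t := by
  intro s t
  induction t with
  | zero =>
    intro hst _
    have : s = 0 := Nat.le_zero.mp hst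
    subst this; simp
  | succ t ih =>
    intro hst htm
    rcases Nat.eq_or_lt_of_le hst with rfl | hlt
    · simp
    · have h1 := ih (by omega) (by omega)
      have h2 := h t (t + 1) (by omega) htm
      omega

/-- Every permutation `P ∈ Γ`, viewed as the sequence `(P 1, ..., P n)`, satisfies
`LIS(P) = ℓ` and `LDS(P) ≤ n - 2ℓ + 2`. -/
theorem stmt14 (n l : ℕ) (hl : 1 ≤ l) (hn : 2 * l ≤ n)
    (f P : ℕ → ℕ) (hf : GammaValid n l f) (hP : IsGammaPerm n l f P) :
    LISnat P 1 (n + 1) = l ∧ LDSnat P 1 (n + 1) ≤ n - 2 * l + 2 := by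
  obtain ⟨_hPerm, hDec, hInc⟩ := hP
  have hln : l ≤ n := by omega
  have hpb : ∀ p, 1 ≤ p → p ≤ n → 1 ≤ partOf n l f p ∧ partOf n l f p ≤ l := by
    intro p hp1 hpn
    unfold partOf
    split
    · omega
    · split
      · omega
      · exact hf p (by omega) (by omega)
  have plow : ∀ p, p ≤ l → partOf n l f p = p := fun p h => if_pos h
  have phigh : ∀ p, n - l + 1 ≤ p → partOf n l f p = p - (n - l) := by
    intro p h
    rw [partOf, if_neg (by omega), if_pos h]
  -- LIS upper bound
  have lis_ub : ∀ m ∈ {m | ∃ idx : ℕ → ℕ,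
      (∀ t, t < m → 1 ≤ idx t ∧ idx t < n + 1) ∧
      (∀ s t, s < t → t < m → idx s < idx t) ∧
      (∀ s t, s < t → t < m → P (idx s) < P (idx t))}, m ≤ l := by
    rintro m ⟨idx, hbound, hmono, hval⟩
    rcases Nat.eq_zero_or_pos m with rfl | hm
    · omega
    have hgs : ∀ s t, s < t → t < m → partOf n l f (idx s) < partOf n l f (idx t) := by
      intro s t hst htm
      have hs := hbound s (by omega)
      have ht := hbound t (by omega)
      have hv := hval s t hst htm
      have hm' := hmono s t hst htm
      rcases lt_trichotomy (partOf n l f (idx s)) (partOf n l f (idx t)) with h | h | h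
      · exact h
      · exfalso
        have := hDec (idx s) (idx t) hs.1 hm' (by omega) h
        omega
      · exfalso
        have := hInc (idx t) (idx s) ht.1 (by omega) hs.1 (by omega) h
        omega
    have h1 : partOf n l f (idx 0) + (m - 1 - 0) ≤ partOf n l f (idx (m - 1)) :=
      add_le_of_strict m (fun t => partOf n l f (idx t)) hgs 0 (m - 1) (by omega) (by omega)
    have hb0 := hbound 0 hm
    have hbm := hbound (m - 1) (by omega)
    have h2 := (hpb (idx 0) hb0.1 (by omega)).1
    have h3 := (hpb (idx (m - 1)) hbm.1 (by omega)).2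
    omega
  have lis_mem : l ∈ {m | ∃ idx : ℕ → ℕ,
      (∀ t, t < m → 1 ≤ idx t ∧ idx t < n + 1) ∧
      (∀ s t, s < t → t < m → idx s < idx t) ∧
      (∀ s t, s < t → t < m → P (idx s) < P (idx t))} := by
    refine ⟨fun t => t + 1, ?_, ?_, ?_⟩
    · intro t ht; exact ⟨by show 1 ≤ t + 1; omega, by show t + 1 < n + 1; omega⟩
    · intro s t hst _; show s + 1 < t + 1; omega
    · intro s t hst htm
      have h1 : partOf n l f (s + 1) = s + 1 := plow _ (by omega)
      have h2 : partOf n l f (t + 1) = t + 1 := plow _ (by omega)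
      exact hInc (s + 1) (t + 1) (by omega) (by omega) (by omega) (by omega)
        (by rw [h1, h2]; omega)
  constructor
  · unfold LISnat
    exact le_antisymm (csSup_le ⟨l, lis_mem⟩ lis_ub) (le_csSup ⟨l, lis_ub⟩ lis_mem)
  · unfold LDSnat
    refine csSup_le ⟨0, fun _ => 0, by intros; omega, by intros; omega, by intros; omega⟩ ?_
    rintro m ⟨idx, hbound, hmono, hval⟩
    by_cases hm : m ≤ 2
    · omega
    push_neg at hm
    have hgd : ∀ s t, s < t → t < m → partOf n l f (idx t) ≤ partOf n l f (idx s) := by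
      intro s t hst htm
      by_contra h
      push_neg at h
      have hs := hbound s (by omega)
      have ht := hbound t (by omega)
      have h1 := hInc (idx s) (idx t) hs.1 (by omega) ht.1 (by omega) h
      have h2 := hval s t hst htm
      omega
    have hlo : ∀ t, 1 ≤ t → t < m → l + 1 ≤ idx t := by
      intro t ht htm
      by_contra h
      push_neg at h
      have h0 := hbound 0 (by omega)
      have hm0 := hmono 0 t (by omega) htm
      have e0 : partOf n l f (idx 0) = idx 0 := plow _ (by omega)
      have et : partOf n l f (idx t) = idx t := plow _ (by omega)
      have := hgd 0 t (by omega) htm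
      omega
    have hhi : ∀ t, t + 1 < m → idx t ≤ n - l := by
      intro t htm
      by_contra h
      push_neg at h
      have hb := hbound (m - 1) (by omega)
      have hmt := hmono t (m - 1) (by omega) (by omega)
      have et : partOf n l f (idx t) = idx t - (n - l) := phigh _ (by omega)
      have em : partOf n l f (idx (m - 1)) = idx (m - 1) - (n - l) := phigh _ (by omega)
      have := hgd t (m - 1) (by omega) (by omega)
      omega
    have h1 : idx 1 + (m - 2 - 1) ≤ idx (m - 2) :=
      add_le_of_strict m idx hmono 1 (m - 2) (by omega) (by omega)
    have h2 := hlo 1 (by omega) (by omega)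
    have h3 := hhi (m - 2) (by omega)
    omega

end Gamma
end
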